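/- arXiv:2211.03396 — 11 statements merged into one kernel-verified Lean document; each statement's English description precedes it below -/
import Mathlib

section
/- For any Boolean function f: {0,1}^n → {0,1}, if for every x ∈ f⁻¹(0) there is a set A_x ⊆ [n] of size at most C0 and for every y ∈ f⁻¹(1) a set B_y ⊆ [n] of size at most C1 such that A_x ∩ B_y contains an index i with x_i ≠ y_i, then there exist probability distributions p_x on [n] for each input x (with 0-inputs using distribution supported on A_x and 1-inputs on B_y) such that for all x ∈ f⁻¹(0), y ∈ f⁻¹(1), ∑_{i : x_i ≠ y_i} p_x(i)·p_y(i) ≥ 1/(C0·C1). In particular CG(f) ≤ C^0(f)·C^1(f). -/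
open Finset

/-- Uniform distribution on `S`, or point mass at a default if `S` is empty. -/
noncomputable def unifCG {n : ℕ} (hn : 0 < n) (S : Finset (Fin n)) : Fin n → ℝ :=
  if S.Nonempty then (fun i => if i ∈ S then ((S.card : ℝ))⁻¹ else 0)
  else fun i => if i = ⟨0, hn⟩ then 1 else 0

lemma unifCG_nonneg {n : ℕ} (hn : 0 < n) (S : Finset (Fin n)) (i : Fin n) :
    0 ≤ unifCG hn S i := by
  unfold unifCG
  split <;> dsimp only <;> split <;> positivity

lemma unifCG_sum {n : ℕ} (hn : 0 < n) (S : Finset (Fin n)) :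
    ∑ i, unifCG hn S i = 1 := by
  unfold unifCG
  split
  · rename_i hS
    rw [Finset.sum_ite_mem, Finset.univ_inter, Finset.sum_const, nsmul_eq_mul,
      mul_inv_cancel₀]
    exact_mod_cast Finset.card_ne_zero.mpr hS
  · simp

lemma unifCG_support {n : ℕ} (hn : 0 < n) (S : Finset (Fin n)) (hS : S.Nonempty)
    (i : Fin n) (hi : i ∉ S) : unifCG hn S i = 0 := by
  unfold unifCG
  rw [if_pos hS, if_neg hi]

lemma unifCG_mem {n : ℕ} (hn : 0 < n) (S : Finset (Fin n)) (i : Fin n) (hi : i ∈ S) :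
    unifCG hn S i = ((S.card : ℝ))⁻¹ := by
  unfold unifCG
  rw [if_pos ⟨i, hi⟩, if_pos hi]

/-- Certificate-based private coin strategy: if every 0-input has a set `A x` of size at most
`C0` and every 1-input a set `B y` of size at most `C1` such that `A x ∩ B y` contains a
differing index, then there are probability distributions (supported on these sets) winning
the certificate game with probability at least `1/(C0·C1)`; i.e. `CG(f) ≤ C⁰(f)·C¹(f)`. -/
theorem stmt_0 {n C0 C1 : ℕ} (hn : 0 < n) (hC0 : 0 < C0) (hC1 : 0 < C1)
    (f : (Fin n → Bool) → Bool)
    (A B : (Fin n → Bool) → Finset (Fin n))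
    (hA : ∀ x, f x = false → (A x).card ≤ C0)
    (hB : ∀ y, f y = true → (B y).card ≤ C1)
    (hint : ∀ x y, f x = false → f y = true → ∃ i ∈ A x ∩ B y, x i ≠ y i) :
    ∃ p : (Fin n → Bool) → Fin n → ℝ,
      (∀ z, (∀ i, 0 ≤ p z i) ∧ ∑ i, p z i = 1) ∧
      (∀ x, f x = false → (∃ y, f y = true) → ∀ i ∉ A x, p x i = 0) ∧
      (∀ y, f y = true → (∃ x, f x = false) → ∀ i ∉ B y, p y i = 0) ∧
      ∀ x y, f x = false → f y = true →
        (1 : ℝ) / (C0 * C1) ≤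
          ∑ i ∈ univ.filter (fun i => x i ≠ y i), p x i * p y i := by
  refine ⟨fun z => unifCG hn (if f z then B z else A z), ?_, ?_, ?_, ?_⟩
  · exact fun z => ⟨unifCG_nonneg hn _, unifCG_sum hn _⟩
  · rintro x hx ⟨y, hy⟩ i hi
    obtain ⟨j, hj, -⟩ := hint x y hx hy
    rw [Finset.mem_inter] at hj
    simp only [hx, if_neg (Bool.false_ne_true)]
    exact unifCG_support hn _ ⟨j, hj.1⟩ i hi
  · rintro y hy ⟨x, hx⟩ i hi
    obtain ⟨j, hj, -⟩ := hint x y hx hy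
    rw [Finset.mem_inter] at hj
    simp only [hy, if_pos]
    exact unifCG_support hn _ ⟨j, hj.2⟩ i hi
  · intro x y hx hy
    obtain ⟨j, hj, hjne⟩ := hint x y hx hy
    rw [Finset.mem_inter] at hj
    have hterm : (1 : ℝ) / (C0 * C1) ≤
        unifCG hn (if f x then B x else A x) j * unifCG hn (if f y then B y else A y) j := by
      simp only [hx, hy, if_neg Bool.false_ne_true, if_pos]
      rw [unifCG_mem hn _ j hj.1, unifCG_mem hn _ j hj.2, one_div, ← mul_inv]
      have h1 : (0:ℝ) < (A x).card := by
        exact_mod_cast Finset.card_pos.mpr ⟨j, hj.1⟩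
      have h2 : (0:ℝ) < (B y).card := by
        exact_mod_cast Finset.card_pos.mpr ⟨j, hj.2⟩
      apply inv_anti₀
      · exact mul_pos h1 h2
      · have := hA x hx
        have := hB y hy
        calc ((A x).card : ℝ) * (B y).card ≤ C0 * C1 := by
              apply mul_le_mul <;> first | positivity | exact_mod_cast ‹_›
          _ = _ := rfl
    refine hterm.trans ?_
    apply Finset.single_le_sum (f := fun i => unifCG hn (if f x then B x else A x) i *
        unifCG hn (if f y then B y else A y) i)
    · intro i _
      exact mul_nonneg (unifCG_nonneg hn _ i) (unifCG_nonneg hn _ i)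
    · simp [hjne]
end

section
/- For any (possibly partial) Boolean function f, MM(f)² ≤ CG(f), where MM is the minimax formulation of the positive adversary bound. -/
open Finset


/-- `∑ u i ^ 2 ≤ (∑ u i)^2` for nonneg `u`. -/
private lemma aux_sum_sq_le {ι : Type*} (s : Finset ι) (u : ι → ℝ)
    (hu : ∀ i ∈ s, 0 ≤ u i) : ∑ i ∈ s, u i ^ 2 ≤ (∑ i ∈ s, u i) ^ 2 := by
  rw [sq (∑ i ∈ s, u i), Finset.sum_mul]
  refine Finset.sum_le_sum fun i hi => ?_
  rw [sq]
  exact mul_le_mul_of_nonneg_left (Finset.single_le_sum hu hi) (hu i hi)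

/-- `MM(f)² ≤ CG(f)` for any (possibly partial) Boolean function `f`, where `MM` is the
minimax formulation of the positive adversary bound and `CG` is the private coin certificate
game complexity. Both are expressed as infima of their sets of achievable upper bounds `M`
(a value `M` is achievable if some family of probability distributions guarantees winning
quantity at least `1/M` on every 0-input/1-input pair). -/
theorem stmt_2 {n : ℕ} (f : (Fin n → Bool) → Option Bool) :
    (sInf {M : ℝ | 0 ≤ M ∧ ∃ p : (Fin n → Bool) → Fin n → ℝ,
        (∀ z, f z ≠ none → (∀ i, 0 ≤ p z i) ∧ ∑ i, p z i = 1) ∧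
        ∀ x y, f x = some false → f y = some true →
          1 ≤ M * ∑ i ∈ univ.filter (fun i => x i ≠ y i),
                Real.sqrt (p x i * p y i)}) ^ 2
    ≤ sInf {M : ℝ | 0 ≤ M ∧ ∃ p : (Fin n → Bool) → Fin n → ℝ,
        (∀ z, f z ≠ none → (∀ i, 0 ≤ p z i) ∧ ∑ i, p z i = 1) ∧
        ∀ x y, f x = some false → f y = some true →
          1 ≤ M * ∑ i ∈ univ.filter (fun i => x i ≠ y i), p x i * p y i} := by
  set A : Set ℝ := {M : ℝ | 0 ≤ M ∧ ∃ p : (Fin n → Bool) → Fin n → ℝ,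
        (∀ z, f z ≠ none → (∀ i, 0 ≤ p z i) ∧ ∑ i, p z i = 1) ∧
        ∀ x y, f x = some false → f y = some true →
          1 ≤ M * ∑ i ∈ univ.filter (fun i => x i ≠ y i),
                Real.sqrt (p x i * p y i)} with hAdef
  set B : Set ℝ := {M : ℝ | 0 ≤ M ∧ ∃ p : (Fin n → Bool) → Fin n → ℝ,
        (∀ z, f z ≠ none → (∀ i, 0 ≤ p z i) ∧ ∑ i, p z i = 1) ∧
        ∀ x y, f x = some false → f y = some true →
          1 ≤ M * ∑ i ∈ univ.filter (fun i => x i ≠ y i), p x i * p y i} with hBdef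
  have hA0 : 0 ≤ sInf A := Real.sInf_nonneg fun M hM => hM.1
  by_cases hB : B.Nonempty
  · refine le_csInf hB fun M hM => ?_
    obtain ⟨hM0, p, hp, hineq⟩ := hM
    have hpn : ∀ z, f z ≠ none → ∀ i, 0 ≤ p z i := fun z hz i => (hp z hz).1 i
    have hmem : Real.sqrt M ∈ A := by
      refine ⟨Real.sqrt_nonneg M, p, hp, fun x y hx hy => ?_⟩
      have h1 := hineq x y hx hy
      set S := univ.filter (fun i => x i ≠ y i)
      have hxnn : ∀ i ∈ S, 0 ≤ p x i * p y i := fun i _ =>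
        mul_nonneg (hpn x (by simp [hx]) i) (hpn y (by simp [hy]) i)
      have hs : Real.sqrt (∑ i ∈ S, p x i * p y i) ≤ ∑ i ∈ S, Real.sqrt (p x i * p y i) := by
        have hle : ∑ i ∈ S, p x i * p y i ≤ (∑ i ∈ S, Real.sqrt (p x i * p y i)) ^ 2 := by
          have := aux_sum_sq_le S (fun i => Real.sqrt (p x i * p y i))
            (fun i _ => Real.sqrt_nonneg _)
          refine le_trans ?_ this
          refine le_of_eq (Finset.sum_congr rfl fun i hi => ?_)
          exact (Real.sq_sqrt (hxnn i hi)).symm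
        calc Real.sqrt (∑ i ∈ S, p x i * p y i)
            ≤ Real.sqrt ((∑ i ∈ S, Real.sqrt (p x i * p y i)) ^ 2) :=
              Real.sqrt_le_sqrt hle
          _ = ∑ i ∈ S, Real.sqrt (p x i * p y i) :=
              Real.sqrt_sq (Finset.sum_nonneg fun i _ => Real.sqrt_nonneg _)
      calc (1 : ℝ) = Real.sqrt 1 := (Real.sqrt_one).symm
        _ ≤ Real.sqrt (M * ∑ i ∈ S, p x i * p y i) := Real.sqrt_le_sqrt h1
        _ = Real.sqrt M * Real.sqrt (∑ i ∈ S, p x i * p y i) := Real.sqrt_mul hM0 _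
        _ ≤ Real.sqrt M * ∑ i ∈ S, Real.sqrt (p x i * p y i) :=
            mul_le_mul_of_nonneg_left hs (Real.sqrt_nonneg M)
    have hle : sInf A ≤ Real.sqrt M := csInf_le ⟨0, fun a ha => ha.1⟩ hmem
    calc sInf A ^ 2 ≤ Real.sqrt M ^ 2 := pow_le_pow_left₀ hA0 hle 2
      _ = M := Real.sq_sqrt hM0
  · rw [Set.not_nonempty_iff_eq_empty] at hB
    have hAe : A = ∅ := by
      rw [Set.eq_empty_iff_forall_notMem]
      intro M hM
      obtain ⟨hM0, p, hp, hineq⟩ := hM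
      have hpn : ∀ z, f z ≠ none → ∀ i, 0 ≤ p z i := fun z hz i => (hp z hz).1 i
      have : (M ^ 2 * n : ℝ) ∈ B := by
        refine ⟨by positivity, p, hp, fun x y hx hy => ?_⟩
        have h1 := hineq x y hx hy
        set S := univ.filter (fun i => x i ≠ y i)
        have hxnn : ∀ i ∈ S, 0 ≤ p x i * p y i := fun i _ =>
          mul_nonneg (hpn x (by simp [hx]) i) (hpn y (by simp [hy]) i)
        have hcs : (∑ i ∈ S, Real.sqrt (p x i * p y i)) ^ 2
            ≤ (n : ℝ) * ∑ i ∈ S, p x i * p y i := by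
          have h := sq_sum_le_card_mul_sum_sq (s := S)
            (f := fun i => Real.sqrt (p x i * p y i))
          have hcard : (S.card : ℝ) ≤ (n : ℝ) := by
            exact_mod_cast le_trans (Finset.card_filter_le _ _) (by simp)
          have heq : ∑ i ∈ S, Real.sqrt (p x i * p y i) ^ 2 = ∑ i ∈ S, p x i * p y i :=
            Finset.sum_congr rfl fun i hi => Real.sq_sqrt (hxnn i hi)
          calc (∑ i ∈ S, Real.sqrt (p x i * p y i)) ^ 2
              ≤ (S.card : ℝ) * ∑ i ∈ S, Real.sqrt (p x i * p y i) ^ 2 := by exact_mod_cast h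
            _ = (S.card : ℝ) * ∑ i ∈ S, p x i * p y i := by rw [heq]
            _ ≤ (n : ℝ) * ∑ i ∈ S, p x i * p y i :=
                mul_le_mul_of_nonneg_right hcard (Finset.sum_nonneg hxnn)
        calc (1 : ℝ) = 1 ^ 2 := by ring
          _ ≤ (M * ∑ i ∈ S, Real.sqrt (p x i * p y i)) ^ 2 := by
              have h0 : (0:ℝ) ≤ 1 := zero_le_one
              exact pow_le_pow_left₀ h0 h1 2
          _ = M ^ 2 * (∑ i ∈ S, Real.sqrt (p x i * p y i)) ^ 2 := by ring
          _ ≤ M ^ 2 * ((n : ℝ) * ∑ i ∈ S, p x i * p y i) :=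
              mul_le_mul_of_nonneg_left hcs (by positivity)
          _ = M ^ 2 * n * ∑ i ∈ S, p x i * p y i := by ring
      rw [hB] at this
      exact this
    rw [hB, hAe, Real.sInf_empty]
    norm_num
end

section
/- Suppose p(i,j|x,y) is a family of probability distributions over [n]×[n], indexed by pairs (x,y) with x ∈ f⁻¹(0), y ∈ f⁻¹(1), satisfying the non-signaling condition: ∑_j p(i,j|x,y) is independent of y and ∑_i p(i,j|x,y) is independent of x. If for every such pair, ∑_{i : x_i ≠ y_i} p(i,i|x,y) ≥ δ > 0, then the fractional certificate complexity satisfies FC(f) ≤ 1/δ. In particular FC(f) ≤ CG^ns(f). -/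
open Finset

/-- If a non-signaling family of distributions `p(i,j|x,y)` wins the certificate game with
probability at least `δ > 0` on every pair `x ∈ f⁻¹(0)`, `y ∈ f⁻¹(1)`, then the fractional
certificate complexity satisfies `FC(f) ≤ 1/δ`: for every input `z` in the domain there are
nonnegative weights `v` of total mass at most `1/δ` covering every opposite-value input.
In particular `FC(f) ≤ CG^ns(f)`. -/
theorem stmt_3 {n : ℕ} (f : (Fin n → Bool) → Option Bool) (δ : ℝ) (hδ : 0 < δ)
    (p : (Fin n → Bool) → (Fin n → Bool) → Fin n → Fin n → ℝ)
    (hnn : ∀ x y, f x = some false → f y = some true → ∀ i j, 0 ≤ p x y i j)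
    (hsum : ∀ x y, f x = some false → f y = some true → ∑ i, ∑ j, p x y i j = 1)
    (hnsA : ∀ x y y', f x = some false → f y = some true → f y' = some true →
      ∀ i, ∑ j, p x y i j = ∑ j, p x y' i j)
    (hnsB : ∀ x x' y, f x = some false → f x' = some false → f y = some true →
      ∀ j, ∑ i, p x y i j = ∑ i, p x' y i j)
    (hwin : ∀ x y, f x = some false → f y = some true →
      δ ≤ ∑ i ∈ univ.filter (fun i => x i ≠ y i), p x y i i) :
    ∀ z b, f z = some b →
      ∃ v : Fin n → ℝ, (∀ i, 0 ≤ v i) ∧ (∑ i, v i) ≤ 1 / δ ∧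
        ∀ z', f z' = some (!b) →
          1 ≤ ∑ i ∈ univ.filter (fun i => z i ≠ z' i), v i := by
  intro z b hz
  by_cases hex : ∃ w, f w = some (!b)
  · obtain ⟨w, hw⟩ := hex
    cases b with
    | false =>
      simp only [Bool.not_false] at hw
      refine ⟨fun i => (∑ j, p z w i j) / δ, ?_, ?_, ?_⟩
      · intro i
        exact div_nonneg (Finset.sum_nonneg fun j _ => hnn z w hz hw i j) hδ.le
      · rw [← Finset.sum_div, hsum z w hz hw]
      · intro z' hz'
        simp only [Bool.not_false] at hz'
        have key : δ ≤ ∑ i ∈ univ.filter (fun i => z i ≠ z' i), (∑ j, p z w i j) := by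
          calc δ ≤ ∑ i ∈ univ.filter (fun i => z i ≠ z' i), p z z' i i :=
                hwin z z' hz hz'
            _ ≤ ∑ i ∈ univ.filter (fun i => z i ≠ z' i), (∑ j, p z z' i j) := by
                refine Finset.sum_le_sum fun i _ => ?_
                exact Finset.single_le_sum (fun j _ => hnn z z' hz hz' i j)
                  (Finset.mem_univ i)
            _ = _ := by
                refine Finset.sum_congr rfl fun i _ => ?_
                exact (hnsA z w z' hz hw hz' i).symm
        rw [← Finset.sum_div]
        rw [le_div_iff₀ hδ, one_mul]
        exact key
    | true =>
      simp only [Bool.not_true] at hw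
      refine ⟨fun j => (∑ i, p w z i j) / δ, ?_, ?_, ?_⟩
      · intro j
        exact div_nonneg (Finset.sum_nonneg fun i _ => hnn w z hw hz i j) hδ.le
      · rw [← Finset.sum_div, Finset.sum_comm, hsum w z hw hz]
      · intro z' hz'
        simp only [Bool.not_true] at hz'
        have key : δ ≤ ∑ j ∈ univ.filter (fun i => z i ≠ z' i), (∑ i, p w z i j) := by
          calc δ ≤ ∑ i ∈ univ.filter (fun i => z' i ≠ z i), p z' z i i :=
                hwin z' z hz' hz
            _ = ∑ i ∈ univ.filter (fun i => z i ≠ z' i), p z' z i i := by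
                apply Finset.sum_congr _ fun _ _ => rfl
                ext i; simp [ne_comm]
            _ ≤ ∑ j ∈ univ.filter (fun i => z i ≠ z' i), (∑ i, p z' z i j) := by
                refine Finset.sum_le_sum fun j _ => ?_
                exact Finset.single_le_sum (fun i _ => hnn z' z hz' hz i j)
                  (Finset.mem_univ j)
            _ = _ := by
                refine Finset.sum_congr rfl fun j _ => ?_
                exact hnsB z' w z hz' hw hz j
        rw [← Finset.sum_div]
        rw [le_div_iff₀ hδ, one_mul]
        exact key
  · refine ⟨fun _ => 0, fun _ => le_rfl, ?_, ?_⟩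
    · simp
      positivity
    · intro z' hz'
      exact absurd ⟨z', hz'⟩ hex
end

section
/- Suppose p(i,j|x,y) is a non-signaling family of probability distributions over [n]×[n] for pairs x ∈ f⁻¹(0), y ∈ f⁻¹(1), with ∑_{i : x_i ≠ y_i} p(i,i|x,y) ≥ δ for all such pairs. Then the classical adversary bound satisfies CMM(f) ≤ 1/δ, where CMM(f) = min over probability distribution families {p_z} of max over pairs x ∈ f⁻¹(0), y ∈ f⁻¹(1) of 1/∑_{i: x_i≠y_i} min{p_x(i), p_y(i)}. -/
open Finset

/-- If a non-signaling family of distributions `p(i,j|x,y)` wins the certificate game with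
probability at least `δ` on every pair `x ∈ f⁻¹(0)`, `y ∈ f⁻¹(1)`, then the classical
adversary bound satisfies `CMM(f) ≤ 1/δ`: there is a family of probability distributions
`q_z` on `[n]` (one for each input in the domain) such that
`∑_{i : x_i ≠ y_i} min (q_x i) (q_y i) ≥ δ` for every such pair. -/
theorem stmt_4 {n : ℕ} (hn : 0 < n) (f : (Fin n → Bool) → Option Bool) (δ : ℝ) (hδ : 0 < δ)
    (p : (Fin n → Bool) → (Fin n → Bool) → Fin n → Fin n → ℝ)
    (hnn : ∀ x y, f x = some false → f y = some true → ∀ i j, 0 ≤ p x y i j)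
    (hsum : ∀ x y, f x = some false → f y = some true → ∑ i, ∑ j, p x y i j = 1)
    (hnsA : ∀ x y y', f x = some false → f y = some true → f y' = some true →
      ∀ i, ∑ j, p x y i j = ∑ j, p x y' i j)
    (hnsB : ∀ x x' y, f x = some false → f x' = some false → f y = some true →
      ∀ j, ∑ i, p x y i j = ∑ i, p x' y i j)
    (hwin : ∀ x y, f x = some false → f y = some true →
      δ ≤ ∑ i ∈ univ.filter (fun i => x i ≠ y i), p x y i i) :
    ∃ q : (Fin n → Bool) → Fin n → ℝ,
      (∀ z, f z ≠ none → (∀ i, 0 ≤ q z i) ∧ ∑ i, q z i = 1) ∧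
      ∀ x y, f x = some false → f y = some true →
        δ ≤ ∑ i ∈ univ.filter (fun i => x i ≠ y i), min (q x i) (q y i) := by
  by_cases hex : (∃ x₀, f x₀ = some false) ∧ (∃ y₀, f y₀ = some true)
  · obtain ⟨⟨x₀, hx₀⟩, ⟨y₀, hy₀⟩⟩ := hex
    refine ⟨fun z i => if f z = some false then ∑ j, p z y₀ i j else ∑ k, p x₀ z k i, ?_, ?_⟩
    · intro z hz
      rcases Option.ne_none_iff_exists'.mp hz with ⟨b, hb⟩
      cases b
      · simp only [hb, if_pos rfl]
        exact ⟨fun i => Finset.sum_nonneg fun j _ => hnn z y₀ hb hy₀ i j,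
          hsum z y₀ hb hy₀⟩
      · have hne : f z ≠ some false := by simp [hb]
        simp only [if_neg hne]
        refine ⟨fun i => Finset.sum_nonneg fun k _ => hnn x₀ z hx₀ hb k i, ?_⟩
        rw [Finset.sum_comm]
        exact hsum x₀ z hx₀ hb
    · intro x y hx hy
      refine le_trans (hwin x y hx hy) (Finset.sum_le_sum fun i _ => ?_)
      have hne : f y ≠ some false := by simp [hy]
      simp only [if_pos hx, if_neg hne]
      refine le_min ?_ ?_
      · rw [← hnsA x y y₀ hx hy hy₀ i]
        exact Finset.single_le_sum (fun j _ => hnn x y hx hy i j) (Finset.mem_univ i)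
      · rw [← hnsB x x₀ y hx hx₀ hy i]
        exact Finset.single_le_sum (fun k _ => hnn x y hx hy k i) (Finset.mem_univ i)
  · refine ⟨fun _ _ => (n : ℝ)⁻¹, ?_, ?_⟩
    · intro z _
      constructor
      · intro i; positivity
      · simp [Finset.card_univ, Field.mul_inv_cancel, hn.ne']
    · intro x y hx hy
      exact absurd ⟨⟨x, hx⟩, ⟨y, hy⟩⟩ hex
end

section
/- For any Boolean function f, if there is a collection of nonnegative numbers p_{A,B} indexed by pairs of functions A: f⁻¹(0) → [n], B: f⁻¹(1) → [n], summing to 1, such that for all x ∈ f⁻¹(0), y ∈ f⁻¹(1), ∑_{(A,B): A(x)=B(y)=i and x_i≠y_i} p_{A,B} ≥ 1/c, then FC(f) ≤ c. In particular FC(f) ≤ CG^pub(f). -/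
open Finset


/-- `FC(f) ≤ CG^pub(f)`: if a distribution `p` over pairs of deterministic strategies wins
the certificate game with probability at least `1/c` on every pair `x ∈ f⁻¹(0)`,
`y ∈ f⁻¹(1)`, then for every input `z` there are nonnegative weights `v` of total mass at
most `c` such that every opposite-value input `z'` is covered:
`∑_{i : z_i ≠ z'_i} v_i ≥ 1`. -/
theorem stmt_5 {n : ℕ} (f : (Fin n → Bool) → Bool) (c : ℝ) (hc : 0 < c)
    (p : (((Fin n → Bool) → Fin n) × ((Fin n → Bool) → Fin n)) → ℝ)
    (hnn : ∀ AB, 0 ≤ p AB) (hsum : ∑ AB, p AB = 1)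
    (hwin : ∀ x y, f x = false → f y = true →
      1 / c ≤ ∑ AB ∈ univ.filter
        (fun AB : ((Fin n → Bool) → Fin n) × ((Fin n → Bool) → Fin n) =>
          AB.1 x = AB.2 y ∧ x (AB.1 x) ≠ y (AB.1 x)), p AB) :
    ∀ z, ∃ v : Fin n → ℝ, (∀ i, 0 ≤ v i) ∧ (∑ i, v i) ≤ c ∧
      ∀ z', f z' = !(f z) →
        1 ≤ ∑ i ∈ univ.filter (fun i => z i ≠ z' i), v i := by
  intro z
  -- choose selector depending on f z
  set g : (((Fin n → Bool) → Fin n) × ((Fin n → Bool) → Fin n)) → Fin n :=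
    fun AB => if f z = false then AB.1 z else AB.2 z with hg
  refine ⟨fun i => c * ∑ AB ∈ univ.filter (fun AB => g AB = i), p AB, ?_, ?_, ?_⟩
  · intro i
    exact mul_nonneg hc.le (Finset.sum_nonneg fun AB _ => hnn AB)
  · rw [← Finset.mul_sum, Finset.sum_fiberwise_eq_sum_filter univ univ g p]
    simp [hsum]
  · intro z' hz'
    have key : 1 / c ≤ ∑ AB ∈ univ.filter (fun AB => z (g AB) ≠ z' (g AB)), p AB := by
      rcases hfz : f z with _ | _
      · refine le_trans (hwin z z' hfz (by simpa [hfz] using hz')) ?_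
        refine Finset.sum_le_sum_of_subset_of_nonneg ?_ (fun AB _ _ => hnn AB)
        intro AB hAB
        simp only [mem_filter, mem_univ, true_and] at hAB ⊢
        simpa [hg, hfz] using hAB.2
      · have hz'0 : f z' = false := by simpa [hfz] using hz'
        refine le_trans (hwin z' z hz'0 hfz) ?_
        refine Finset.sum_le_sum_of_subset_of_nonneg ?_ (fun AB _ _ => hnn AB)
        intro AB hAB
        simp only [mem_filter, mem_univ, true_and] at hAB ⊢
        rcases hAB with ⟨h1, h2⟩
        simp only [hg, hfz, Bool.true_eq_false, if_false]
        rw [h1] at h2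
        exact fun h => h2 h.symm
    calc (1:ℝ) = c * (1/c) := by field_simp
      _ ≤ c * ∑ AB ∈ univ.filter (fun AB => z (g AB) ≠ z' (g AB)), p AB :=
          mul_le_mul_of_nonneg_left key hc.le
      _ = ∑ i ∈ univ.filter (fun i => z i ≠ z' i),
            c * ∑ AB ∈ univ.filter (fun AB => g AB = i), p AB := by
          rw [← Finset.mul_sum,
            Finset.sum_fiberwise_eq_sum_filter univ (univ.filter fun i => z i ≠ z' i) g p]
          congr 1
          apply Finset.sum_congr _ (fun _ _ => rfl)
          ext AB; simp
end

section
/- For any Boolean function f with nonzero sensitivity, any public coin strategy for the single-bit certificate game has winning probability at most 1/s(f) on some sensitive input pair; hence CG^pub_[1](f) ≥ s(f). -/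
open Finset

/-- Sensitivity of a total Boolean function. -/
def sensT {n : ℕ} (f : (Fin n → Bool) → Bool) : ℕ :=
  univ.sup (fun x : Fin n → Bool =>
    (univ.filter (fun i => f (Function.update x i (!x i)) ≠ f x)).card)

lemma helper {α : Type*} [Fintype α] {n : ℕ} (s : ℕ) (hs : 0 < s)
    (p : α → ℝ) (hnn : ∀ a, 0 ≤ p a) (hsum : ∑ a, p a = 1)
    (S : Finset (Fin n)) (hS : S.card = s)
    (E : α → Fin n → Prop) [∀ a i, Decidable (E a i)]
    (c : α → Fin n) (hE : ∀ a i, E a i → i = c a) :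
    ∃ i ∈ S, ∑ a ∈ univ.filter (fun a => E a i), p a ≤ 1 / (s : ℝ) := by
  by_contra h
  push_neg at h
  have htot : (1 : ℝ) < ∑ i ∈ S, ∑ a ∈ univ.filter (fun a => E a i), p a := by
    have : ∑ i ∈ S, (1 / (s : ℝ)) < ∑ i ∈ S, ∑ a ∈ univ.filter (fun a => E a i), p a := by
      apply Finset.sum_lt_sum_of_nonempty
      · rw [← Finset.card_pos, hS]; exact hs
      · exact h
    calc (1:ℝ) = ∑ i ∈ S, (1 / (s : ℝ)) := by
            rw [Finset.sum_const, hS, nsmul_eq_mul]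
            field_simp
      _ < _ := this
  have hle : ∑ i ∈ S, ∑ a ∈ univ.filter (fun a => E a i), p a ≤ 1 := by
    calc ∑ i ∈ S, ∑ a ∈ univ.filter (fun a => E a i), p a
        = ∑ i ∈ S, ∑ a : α, if E a i then p a else 0 := by
          apply Finset.sum_congr rfl; intro i _
          rw [Finset.sum_filter]
      _ = ∑ a : α, ∑ i ∈ S, if E a i then p a else 0 := Finset.sum_comm
      _ ≤ ∑ a : α, p a := by
          apply Finset.sum_le_sum
          intro a _
          have : ∑ i ∈ S, (if E a i then p a else 0) = ∑ i ∈ S.filter (fun i => E a i), p a := by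
            rw [Finset.sum_filter]
          rw [this, Finset.sum_const]
          have hcard : (S.filter (fun i => E a i)).card ≤ 1 := by
            apply Finset.card_le_one.mpr
            intro i hi j hj
            simp only [Finset.mem_filter] at hi hj
            rw [hE a i hi.2, hE a j hj.2]
          calc (S.filter (fun i => E a i)).card • p a
              ≤ 1 • p a := by
                apply smul_le_smul_of_nonneg_right _ (hnn a)
                exact_mod_cast hcard
            _ = p a := one_smul _ _
      _ = 1 := hsum
  linarith

/-- Lower bound `CG^pub_[1](f) ≥ s(f)`: any public coin strategy (a distribution over
pairs of deterministic strategies) for the single-bit certificate game wins with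
probability at most `1/s(f)` on some sensitive input pair `(x, x^(i))` with `f(x)=0`,
`f(x^(i))=1`. -/
theorem stmt_11 {n : ℕ} (f : (Fin n → Bool) → Bool) (hs : 0 < sensT f)
    (p : (((Fin n → Bool) → Fin n) × ((Fin n → Bool) → Fin n)) → ℝ)
    (hnn : ∀ AB, 0 ≤ p AB) (hsum : ∑ AB, p AB = 1) :
    ∃ x i, f x = false ∧ f (Function.update x i (!x i)) = true ∧
      ∑ AB ∈ univ.filter
          (fun AB : ((Fin n → Bool) → Fin n) × ((Fin n → Bool) → Fin n) =>
            AB.1 x = i ∧ AB.2 (Function.update x i (!x i)) = i), p AB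
        ≤ 1 / (sensT f : ℝ) := by
  -- get maximizer
  have hne : (univ : Finset (Fin n → Bool)).Nonempty := univ_nonempty
  obtain ⟨x₀, -, hx₀⟩ := Finset.exists_mem_eq_sup univ hne
    (fun x : Fin n → Bool =>
      (univ.filter (fun i => f (Function.update x i (!x i)) ≠ f x)).card)
  set S := univ.filter (fun i => f (Function.update x₀ i (!x₀ i)) ≠ f x₀) with hSdef
  have hScard : S.card = sensT f := by rw [sensT, hx₀]
  rcases Bool.eq_false_or_eq_true (f x₀) with h0 | h0
  · -- f x₀ = true : pairs (x₀^i, x₀)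
    obtain ⟨i, hiS, hile⟩ := helper (sensT f) hs p hnn hsum S hScard
      (fun AB i => AB.1 (Function.update x₀ i (!x₀ i)) = i ∧ AB.2 x₀ = i)
      (fun AB => AB.2 x₀) (fun AB i hi => hi.2.symm)
    set x := Function.update x₀ i (!x₀ i) with hxdef
    have hback : Function.update x i (!x i) = x₀ := by
      have : x i = !x₀ i := by rw [hxdef, Function.update_self]
      rw [this, Bool.not_not, hxdef, Function.update_idem, Function.update_eq_self]
    simp only [Finset.mem_filter, hSdef] at hiS
    have hfx : f x = false := by
      have := hiS.2
      rw [h0] at this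
      simpa using this
    refine ⟨x, i, hfx, by rw [hback, h0], ?_⟩
    rw [hback]
    exact hile
  · -- f x₀ = false : pairs (x₀, x₀^i)
    obtain ⟨i, hiS, hile⟩ := helper (sensT f) hs p hnn hsum S hScard
      (fun AB i => AB.1 x₀ = i ∧ AB.2 (Function.update x₀ i (!x₀ i)) = i)
      (fun AB => AB.1 x₀) (fun AB i hi => hi.1.symm)
    refine ⟨x₀, i, h0, ?_, hile⟩
    simp only [hSdef, Finset.mem_filter] at hiS
    have := hiS.2
    rw [h0] at this
    simpa using this
end

section
/- For any Boolean function f with nonzero sensitivity, there is a public coin strategy for the single-bit certificate game winning with probability at least 1/(e²·s(f)) on every sensitive pair; hence CG^pub_[1](f) ≤ e²·s(f). -/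
/-! The players share a uniformly random hash `h : Fin n → Fin s` with `s = s(f)`, and each
outputs the least of its sensitive indices that `h` sends to `0`. On a sensitive pair `(x, x^i)`
both output `i` as soon as `h i = 0` while the other indices sensitive for `x` or `x^i`, at most
`2s - 2` of them, avoid `0`; this has probability at least `(1/s) (1 - 1/s)^(2s-2) ≥ 1/(e² s)`. -/

open Finset

open Real

lemma exp_neg_one_le_one_sub_inv_pow (s : ℕ) : exp (-1) ≤ (1 - (s : ℝ)⁻¹) ^ (s - 1) := by
  rcases Nat.lt_or_ge s 2 with hs | hs
  · interval_cases s <;> simp [exp_le_one_iff]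
  obtain ⟨m, rfl⟩ : ∃ m, s = m + 1 := ⟨s - 1, by omega⟩
  have hm : (m : ℝ) ≠ 0 := by norm_cast; omega
  have hbase : 1 - ((m + 1 : ℕ) : ℝ)⁻¹ = (1 + (m : ℝ)⁻¹)⁻¹ := by
    push_cast; field_simp; ring
  rw [hbase, Nat.add_sub_cancel, inv_pow, exp_neg]
  exact inv_anti₀ (by positivity) one_add_inv_pow_le_exp

lemma exp_neg_two_le_one_sub_inv_pow {s k : ℕ} (hk : k ≤ 2 * (s - 1)) :
    exp (-2) ≤ (1 - (s : ℝ)⁻¹) ^ k := by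
  have h0 : 0 ≤ 1 - (s : ℝ)⁻¹ := sub_nonneg.2 (Nat.cast_inv_le_one s)
  have h1 : 1 - (s : ℝ)⁻¹ ≤ 1 := sub_le_self _ (by positivity)
  calc exp (-2) = exp (-1) ^ 2 := by rw [← exp_nat_mul]; norm_num
    _ ≤ ((1 - (s : ℝ)⁻¹) ^ (s - 1)) ^ 2 := by gcongr; exact exp_neg_one_le_one_sub_inv_pow s
    _ = (1 - (s : ℝ)⁻¹) ^ (2 * (s - 1)) := by rw [← pow_mul, mul_comm]
    _ ≤ (1 - (s : ℝ)⁻¹) ^ k := pow_le_pow_of_le_one h0 h1 hk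

section UniformPushforward

variable {Ω β : Type*} [Fintype Ω] [DecidableEq β]

noncomputable def uniformPushforward (g : Ω → β) (b : β) : ℝ :=
  #{ω | g ω = b} / Fintype.card Ω

lemma uniformPushforward_nonneg (g : Ω → β) (b : β) : 0 ≤ uniformPushforward g b := by
  unfold uniformPushforward; positivity

lemma sum_uniformPushforward_of_mem (g : Ω → β) (t : Finset β) :
    ∑ b ∈ t, uniformPushforward g b = #{ω | g ω ∈ t} / Fintype.card Ω := by
  simp only [uniformPushforward, ← sum_div]
  exact_mod_cast congrArg (fun k : ℕ => (k : ℝ) / Fintype.card Ω)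
    (sum_card_fiberwise_eq_card_filter univ t g)

lemma sum_uniformPushforward [Nonempty Ω] [Fintype β] (g : Ω → β) :
    ∑ b, uniformPushforward g b = 1 := by
  rw [sum_uniformPushforward_of_mem]
  simp

end UniformPushforward

section Hashing

variable {ι : Type*} [Fintype ι] {s : ℕ}

lemma card_isolating_hashes_div_pow [DecidableEq ι] (T : Finset ι) {i : ι} (hi : i ∈ T)
    (z : Fin s) :
    (#{h : ι → Fin s | ∀ j ∈ T, (h j = z ↔ j = i)} : ℝ) / (s : ℝ) ^ Fintype.card ι
      = (s : ℝ)⁻¹ * (1 - (s : ℝ)⁻¹) ^ (#T - 1) := by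
  have hs : (s : ℝ) ≠ 0 := by have := z.pos; positivity
  set C : ι → Finset (Fin s) := fun j => if j ∈ T then (if j = i then {z} else {z}ᶜ) else univ
  have hE : ({h : ι → Fin s | ∀ j ∈ T, (h j = z ↔ j = i)} : Finset _) = Fintype.piFinset C := by
    ext h
    simp only [mem_filter, mem_univ, true_and, Fintype.mem_piFinset, C]
    refine forall_congr' fun j => ?_
    split_ifs <;> simp_all
  have hC : ∀ j, (#(C j) : ℝ) / s =
      if j ∈ T then (if j = i then (s : ℝ)⁻¹ else 1 - (s : ℝ)⁻¹) else 1 := by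
    intro j
    simp only [C]
    split_ifs
    · simp
    · rw [card_compl, card_singleton, Fintype.card_fin, Nat.cast_sub z.pos, sub_div,
        div_self hs, Nat.cast_one, one_div]
    · simp [hs]
  rw [hE, Fintype.card_piFinset, Nat.cast_prod, ← card_univ, ← prod_const, ← prod_div_distrib]
  simp only [hC, prod_ite_mem, univ_inter]
  rw [← mul_prod_erase T _ hi, if_pos rfl, prod_congr rfl (g := fun _ => 1 - (s : ℝ)⁻¹),
    prod_const, card_erase_of_mem hi]
  intro j hj
  rw [if_neg (ne_of_mem_erase hj)]

variable [LinearOrder ι]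

def hashPick {κ : Type*} [DecidableEq κ] (d : ι) (U : Finset ι) (h : ι → κ) (z : κ) : ι :=
  if hne : {j ∈ U | h j = z}.Nonempty then {j ∈ U | h j = z}.min' hne else d

omit [Fintype ι] in
lemma hashPick_eq_of_forall_iff {κ : Type*} [DecidableEq κ] (d : ι) {U : Finset ι} {h : ι → κ}
    {z : κ} {i : ι} (hi : i ∈ U) (hU : ∀ j ∈ U, (h j = z ↔ j = i)) : hashPick d U h z = i := by
  have hfilter : {j ∈ U | h j = z} = {i} := by
    ext j
    simp only [mem_filter, mem_singleton]
    exact ⟨fun ⟨hj, hjz⟩ => (hU j hj).1 hjz, fun hji => hji ▸ ⟨hi, (hU i hi).2 rfl⟩⟩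
  simp [hashPick, hfilter]

lemma one_div_exp_two_mul_le_card_hashPick_eq (d : ι) (z : Fin s) {U V : Finset ι} {i : ι}
    (hU : i ∈ U) (hV : i ∈ V) (hUV : #(U ∪ V) < 2 * s) :
    1 / (exp 1 ^ 2 * s) ≤
      (#{h : ι → Fin s | hashPick d U h z = i ∧ hashPick d V h z = i} : ℝ) /
        (s : ℝ) ^ Fintype.card ι := by
  calc 1 / (exp 1 ^ 2 * s) = (s : ℝ)⁻¹ * exp (-2) := by
        rw [exp_neg, exp_one_pow]; push_cast; ring
    _ ≤ (s : ℝ)⁻¹ * (1 - (s : ℝ)⁻¹) ^ (#(U ∪ V) - 1) := by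
        gcongr; exact exp_neg_two_le_one_sub_inv_pow (by omega)
    _ = (#{h : ι → Fin s | ∀ j ∈ U ∪ V, (h j = z ↔ j = i)} : ℝ) / (s : ℝ) ^ Fintype.card ι :=
        (card_isolating_hashes_div_pow _ (mem_union_left _ hU) z).symm
    _ ≤ _ := by
        gcongr with h _
        intro hh
        exact ⟨hashPick_eq_of_forall_iff d hU fun j hj => hh j (mem_union_left _ hj),
          hashPick_eq_of_forall_iff d hV fun j hj => hh j (mem_union_right _ hj)⟩

end Hashing

lemma card_union_lt_two_mul {α : Type*} [DecidableEq α] {U V : Finset α} {i : α} {k : ℕ}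
    (hU : i ∈ U) (hV : i ∈ V) (hUk : #U ≤ k) (hVk : #V ≤ k) : #(U ∪ V) < 2 * k := by
  have := card_union_add_card_inter U V
  have := card_pos.2 ⟨i, mem_inter.2 ⟨hU, hV⟩⟩
  omega

section Sensitivity

variable {n : ℕ} (f : (Fin n → Bool) → Bool)

def sensitiveSet (x : Fin n → Bool) : Finset (Fin n) :=
  {i | f (Function.update x i (!x i)) ≠ f x}

lemma card_sensitiveSet_le_sensT (x : Fin n → Bool) : #(sensitiveSet f x) ≤ sensT f :=
  le_sup (f := fun x => #(sensitiveSet f x)) (mem_univ x)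

end Sensitivity

/-- Upper bound `CG^pub_[1](f) ≤ e²·s(f)`: there is a public coin strategy (a distribution
over pairs of deterministic strategies) for the single-bit certificate game winning with
probability at least `1/(e²·s(f))` on every sensitive pair `(x, x^(i))` with `f(x)=0`,
`f(x^(i))=1`. -/
theorem stmt_12 {n : ℕ} (f : (Fin n → Bool) → Bool) (hs : 0 < sensT f) :
    ∃ p : (((Fin n → Bool) → Fin n) × ((Fin n → Bool) → Fin n)) → ℝ,
      (∀ AB, 0 ≤ p AB) ∧ (∑ AB, p AB = 1) ∧
      ∀ x i, f x = false → f (Function.update x i (!x i)) = true →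
        1 / (Real.exp 1 ^ 2 * (sensT f : ℝ)) ≤
          ∑ AB ∈ univ.filter
            (fun AB : ((Fin n → Bool) → Fin n) × ((Fin n → Bool) → Fin n) =>
              AB.1 x = i ∧ AB.2 (Function.update x i (!x i)) = i), p AB := by
  obtain ⟨x₀, -, hx₀⟩ := Finset.lt_sup_iff.1 hs
  obtain ⟨d, -⟩ := card_pos.1 hx₀
  let z : Fin (sensT f) := ⟨0, hs⟩
  have : Nonempty (Fin n → Fin (sensT f)) := ⟨fun _ => z⟩
  let A (h : Fin n → Fin (sensT f)) (x : Fin n → Bool) : Fin n :=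
    hashPick d (sensitiveSet f x) h z
  refine ⟨uniformPushforward fun h => (A h, A h), uniformPushforward_nonneg _,
    sum_uniformPushforward _, fun x i hx hy => ?_⟩
  have hix : i ∈ sensitiveSet f x := by simp [sensitiveSet, hx, hy]
  have hiy : i ∈ sensitiveSet f (Function.update x i (!x i)) := by
    simp [sensitiveSet, hx, hy]
  have hunion := card_union_lt_two_mul hix hiy (card_sensitiveSet_le_sensT f x)
    (card_sensitiveSet_le_sensT f _)
  rw [sum_uniformPushforward_of_mem, Fintype.card_fun, Fintype.card_fin]
  simpa using one_div_exp_two_mul_le_card_hashPick_eq d z hix hiy hunion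
end

section
/- For a binomial random variable X ~ Bin(k, 1/2), the ratio of the lower tail Pr[X ≤ k/2 - 100√(k log k)] to the tail Pr[X ≤ k/2 - √(k log k)] is bounded by 15·k^{16}·k^{-10^4}, which tends to 0; equivalently, ∑_{j=0}^{k/2 - 100√(k log k)} C(k,j) ≤ c₁·∑_{j=0}^{k/2 - √(k log k)} C(k,j) for an arbitrarily small constant c₁ and large k. -/
set_option maxHeartbeats 4000000


open Finset

private lemma choose_mono_of_le_half {k : ℕ} : ∀ {j i : ℕ}, i ≤ j → j ≤ k / 2 →
    k.choose i ≤ k.choose j := by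
  intro j
  induction j with
  | zero => intro i hi _; interval_cases i; exact le_rfl
  | succ j ih =>
    intro i hi hj
    rcases Nat.eq_or_lt_of_le hi with rfl | h
    · exact le_rfl
    · exact le_trans (ih (Nat.lt_succ_iff.mp h) (le_trans (Nat.le_succ j) hj))
        (Nat.choose_le_succ_of_lt_half_left (lt_of_lt_of_le (Nat.lt_succ_self j) hj))

private lemma choose_ratio (k : ℕ) (q : ℝ) (hq : 0 ≤ q) :
    ∀ (d j : ℕ), j + d ≤ k →
      (∀ i : ℕ, j ≤ i → i < j + d → ((i : ℝ) + 1) ≤ q * ((k : ℝ) - i)) →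
      (k.choose j : ℝ) ≤ q ^ d * (k.choose (j + d) : ℝ) := by
  intro d
  induction d with
  | zero => intro j _ _; simp
  | succ d ih =>
    intro j hjd hcond
    have hjk : j < k := by omega
    have h1 : ((j : ℝ) + 1) ≤ q * ((k : ℝ) - j) := hcond j le_rfl (by omega)
    have hkj : (0 : ℝ) < (k : ℝ) - j := by
      have : (j : ℝ) < k := by exact_mod_cast hjk
      linarith
    have hid : k.choose (j + 1) * (j + 1) = k.choose j * (k - j) :=
      Nat.choose_succ_right_eq k j
    have hidR : (k.choose (j + 1) : ℝ) * ((j : ℝ) + 1)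
        = (k.choose j : ℝ) * ((k : ℝ) - j) := by
      have h' := congrArg (Nat.cast : ℕ → ℝ) hid
      push_cast [Nat.cast_sub hjk.le] at h'
      linarith [h']
    have hstep : (k.choose j : ℝ) ≤ q * k.choose (j + 1) := by
      rw [← mul_le_mul_iff_left₀ hkj]
      calc (k.choose j : ℝ) * ((k : ℝ) - j)
          = (k.choose (j + 1) : ℝ) * ((j : ℝ) + 1) := hidR.symm
        _ ≤ (k.choose (j + 1) : ℝ) * (q * ((k : ℝ) - j)) := by
            apply mul_le_mul_of_nonneg_left h1 (by positivity)
        _ = q * (k.choose (j + 1) : ℝ) * ((k : ℝ) - j) := by ring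
    have ih' := ih (j + 1) (by omega) (fun i hi1 hi2 => hcond i (by omega) (by omega))
    calc (k.choose j : ℝ) ≤ q * (k.choose (j + 1) : ℝ) := hstep
      _ ≤ q * (q ^ d * (k.choose (j + 1 + d) : ℝ)) := mul_le_mul_of_nonneg_left ih' hq
      _ = q ^ (d + 1) * (k.choose (j + (d + 1)) : ℝ) := by
          rw [show j + 1 + d = j + (d + 1) by omega]; ring

/-- Comparison of binomial tails: for large `k`, the lower tail of `Bin(k, 1/2)` up to
`k/2 - 100√(k log k)` is at most a `15·k^16·k^{-10⁴}` fraction of the tail up to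
`k/2 - √(k log k)`; in particular for any `c₁ > 0` and large enough `k`,
`∑_{j ≤ k/2 - 100√(k log k)} C(k,j) ≤ c₁·∑_{j ≤ k/2 - √(k log k)} C(k,j)`. -/
theorem stmt_15 :
    ∀ c₁ : ℝ, 0 < c₁ → ∃ K : ℕ, ∀ k : ℕ, K ≤ k →
      ((∑ j ∈ (Finset.range (k + 1)).filter
            (fun j : ℕ => (j : ℝ) ≤ (k : ℝ) / 2 - 100 * Real.sqrt (k * Real.log k)),
            (k.choose j : ℝ))
        ≤ 15 * (k : ℝ) ^ (16 : ℕ) / (k : ℝ) ^ (10000 : ℕ) *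
          ∑ j ∈ (Finset.range (k + 1)).filter
            (fun j : ℕ => (j : ℝ) ≤ (k : ℝ) / 2 - Real.sqrt (k * Real.log k)),
            (k.choose j : ℝ)) ∧
      (∑ j ∈ (Finset.range (k + 1)).filter
            (fun j : ℕ => (j : ℝ) ≤ (k : ℝ) / 2 - 100 * Real.sqrt (k * Real.log k)),
            (k.choose j : ℝ))
        ≤ c₁ *
          ∑ j ∈ (Finset.range (k + 1)).filter
            (fun j : ℕ => (j : ℝ) ≤ (k : ℝ) / 2 - Real.sqrt (k * Real.log k)),
            (k.choose j : ℝ) := by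
  intro c₁ hc₁
  -- eventual conditions
  have hlog : ∀ᶠ k : ℕ in Filter.atTop, 1 ≤ Real.log k :=
    (Real.tendsto_log_atTop.comp tendsto_natCast_atTop_atTop).eventually_ge_atTop 1
  have hsmall : ∀ᶠ k : ℕ in Filter.atTop, Real.log k ≤ (1 / 10 ^ 10 : ℝ) * k := by
    have h := Real.isLittleO_log_id_atTop.def (show (0 : ℝ) < 1 / 10 ^ 10 by norm_num)
    have h2 := tendsto_natCast_atTop_atTop.eventually h
    filter_upwards [h2] with k hk
    simp only [Real.norm_eq_abs, id_eq, Function.comp] at hk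
    have h3 : Real.log k ≤ |Real.log k| := le_abs_self _
    have h4 : |(k : ℝ)| = (k : ℝ) := abs_of_nonneg (Nat.cast_nonneg k)
    rw [h4] at hk
    linarith
  have hbig1 : ∀ᶠ k : ℕ in Filter.atTop, Real.exp 200 * 2 / 15 ≤ (k : ℝ) :=
    tendsto_natCast_atTop_atTop.eventually_ge_atTop _
  have hbig2 : ∀ᶠ k : ℕ in Filter.atTop, 15 / c₁ ≤ (k : ℝ) :=
    tendsto_natCast_atTop_atTop.eventually_ge_atTop _
  have hall := (hlog.and (hsmall.and (hbig1.and hbig2))).and (Filter.eventually_ge_atTop 3)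
  rw [Filter.eventually_atTop] at hall
  obtain ⟨K, hK⟩ := hall
  refine ⟨K, fun k hk => ?_⟩
  obtain ⟨⟨hlk1, hlk_small, he200, hc1k⟩, hk3⟩ := hK k hk
  set lk : ℝ := Real.log k with hlk_def
  set t : ℝ := Real.sqrt (k * lk) with ht_def
  have hkR : (3 : ℝ) ≤ (k : ℝ) := by exact_mod_cast hk3
  have hkpos : (0 : ℝ) < k := by linarith
  have ht_nonneg : 0 ≤ t := Real.sqrt_nonneg _
  have ht_sq : t ^ 2 = (k : ℝ) * lk := Real.sq_sqrt (by positivity)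
  have ht1 : 1 ≤ t := by nlinarith
  have htk : 100 * t ≤ (k : ℝ) / 1000 := by nlinarith
  have htk' : t ≤ (k : ℝ) := by nlinarith
  have hnn : (0 : ℝ) ≤ (k : ℝ) / 2 - 100 * t := by linarith
  set a : ℕ := ⌊(k : ℝ) / 2 - 100 * t⌋₊ with ha_def
  set b : ℕ := ⌊(k : ℝ) / 2 - 50 * t⌋₊ with hb_def
  set m : ℕ := ⌊(k : ℝ) / 2 - t⌋₊ with hm_def
  have ha_le : (a : ℝ) ≤ (k : ℝ) / 2 - 100 * t := Nat.floor_le hnn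
  have hb_le : (b : ℝ) ≤ (k : ℝ) / 2 - 50 * t := Nat.floor_le (by linarith)
  have hm_le : (m : ℝ) ≤ (k : ℝ) / 2 - t := Nat.floor_le (by linarith)
  have hb_gt : (k : ℝ) / 2 - 50 * t - 1 < (b : ℝ) := by
    have := Nat.lt_floor_add_one ((k : ℝ) / 2 - 50 * t)
    linarith
  have hab : a ≤ b := Nat.floor_mono (by linarith)
  have hbm : b ≤ m := Nat.floor_mono (by linarith)
  have hm_half : m ≤ k / 2 := by
    rw [Nat.le_div_iff_mul_le (by norm_num)]
    have : (m : ℝ) * 2 ≤ (k : ℝ) := by linarith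
    exact_mod_cast this
  have hmk : m ≤ k := le_trans hm_half (Nat.div_le_self k 2)
  have hbk : b ≤ k := le_trans hbm hmk
  have hak : a ≤ k := le_trans hab hbk
  have ha_half : a ≤ k / 2 := le_trans (le_trans hab hbm) hm_half
  -- rewrite the small-tail sum
  have hLset : (Finset.range (k + 1)).filter
      (fun j : ℕ => (j : ℝ) ≤ (k : ℝ) / 2 - 100 * t) = Finset.range (a + 1) := by
    ext j
    simp only [Finset.mem_filter, Finset.mem_range, Nat.lt_succ_iff]
    constructor
    · rintro ⟨-, h2⟩; exact Nat.le_floor h2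
    · intro hja
      refine ⟨le_trans hja hak, ?_⟩
      have : (j : ℝ) ≤ (a : ℝ) := by exact_mod_cast hja
      linarith
  set L : ℝ := ∑ j ∈ (Finset.range (k + 1)).filter
      (fun j : ℕ => (j : ℝ) ≤ (k : ℝ) / 2 - 100 * t), (k.choose j : ℝ) with hL_def
  set S : ℝ := ∑ j ∈ (Finset.range (k + 1)).filter
      (fun j : ℕ => (j : ℝ) ≤ (k : ℝ) / 2 - t), (k.choose j : ℝ) with hS_def
  have hS0 : 0 ≤ S := Finset.sum_nonneg (fun i _ => by positivity)
  have hSm : (k.choose m : ℝ) ≤ S := by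
    apply Finset.single_le_sum (f := fun j : ℕ => (k.choose j : ℝ))
      (fun i _ => by positivity)
    simp only [Finset.mem_filter, Finset.mem_range, Nat.lt_succ_iff]
    exact ⟨hmk, hm_le⟩
  have hLbound : L ≤ ((k : ℝ) + 1) * (k.choose a : ℝ) := by
    rw [hL_def, hLset]
    calc ∑ j ∈ Finset.range (a + 1), (k.choose j : ℝ)
        ≤ ∑ _j ∈ Finset.range (a + 1), (k.choose a : ℝ) := by
          apply Finset.sum_le_sum
          intro j hj
          exact_mod_cast choose_mono_of_le_half (Nat.lt_succ_iff.mp (Finset.mem_range.mp hj))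
            ha_half
      _ = ((a : ℝ) + 1) * (k.choose a : ℝ) := by
          rw [Finset.sum_const, Finset.card_range]
          push_cast
          ring
      _ ≤ ((k : ℝ) + 1) * (k.choose a : ℝ) := by
          have : (a : ℝ) ≤ (k : ℝ) := by exact_mod_cast hak
          have h0 : (0 : ℝ) ≤ (k.choose a : ℝ) := by positivity
          nlinarith
  -- the ratio bound
  set q : ℝ := (b : ℝ) / ((k : ℝ) - b + 1) with hq_def
  have hkb : (k : ℝ) / 2 + 50 * t ≤ (k : ℝ) - b := by linarith
  have hden : (0 : ℝ) < (k : ℝ) - b + 1 := by linarith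
  have hq0 : 0 ≤ q := div_nonneg (Nat.cast_nonneg b) hden.le
  set n : ℕ := b - a with hn_def
  have hratio : (k.choose a : ℝ) ≤ q ^ n * (k.choose b : ℝ) := by
    have h := choose_ratio k q hq0 n a (by omega) ?_
    · rwa [show a + n = b by omega] at h
    · intro i hi1 hi2
      have hib : i + 1 ≤ b := by omega
      have hibR : (i : ℝ) + 1 ≤ (b : ℝ) := by exact_mod_cast hib
      have hki : (k : ℝ) - b + 1 ≤ (k : ℝ) - i := by linarith
      have hqb : (b : ℝ) = q * ((k : ℝ) - b + 1) := by
        rw [hq_def, div_mul_cancel₀]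
        exact hden.ne'
      calc (i : ℝ) + 1 ≤ (b : ℝ) := hibR
        _ = q * ((k : ℝ) - b + 1) := hqb
        _ ≤ q * ((k : ℝ) - i) := mul_le_mul_of_nonneg_left hki hq0
  have hbm' : (k.choose b : ℝ) ≤ (k.choose m : ℝ) := by
    exact_mod_cast choose_mono_of_le_half hbm hm_half
  -- bound q by an exponential
  have hq_le1 : q ≤ ((k : ℝ) / 2 - 50 * t) / ((k : ℝ) / 2 + 50 * t) := by
    apply div_le_div₀ (by linarith) hb_le (by linarith) (by linarith)
  have hq_le2 : ((k : ℝ) / 2 - 50 * t) / ((k : ℝ) / 2 + 50 * t)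
      = ((k : ℝ) - 100 * t) / ((k : ℝ) + 100 * t) := by
    rw [div_eq_div_iff (by linarith) (by linarith)]
    ring
  have hq_exp : q ≤ Real.exp (-(200 * t) / ((k : ℝ) + 100 * t)) := by
    have heq : ((k : ℝ) - 100 * t) / ((k : ℝ) + 100 * t)
        = -(200 * t) / ((k : ℝ) + 100 * t) + 1 := by
      field_simp
      ring
    calc q ≤ ((k : ℝ) - 100 * t) / ((k : ℝ) + 100 * t) := by rw [← hq_le2]; exact hq_le1
      _ = -(200 * t) / ((k : ℝ) + 100 * t) + 1 := heq
      _ ≤ Real.exp (-(200 * t) / ((k : ℝ) + 100 * t)) := Real.add_one_le_exp _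
  have hq_exp2 : q ≤ Real.exp (-(200000 * t / (1001 * (k : ℝ)))) := by
    refine hq_exp.trans (Real.exp_le_exp.mpr ?_)
    rw [neg_div, neg_le_neg_iff, div_le_div_iff₀ (by positivity) (by linarith)]
    nlinarith
  -- exponent estimate
  have hn_ge : 50 * t - 1 ≤ (n : ℝ) := by
    have : (n : ℝ) = (b : ℝ) - (a : ℝ) := by
      rw [hn_def]
      push_cast [Nat.cast_sub hab]
      ring
    linarith
  have hnt : 50 * t ^ 2 - t ≤ (n : ℝ) * t := by nlinarith
  have key : 9990 * lk - 200 ≤ (n : ℝ) * (200000 * t / (1001 * (k : ℝ))) := by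
    have h1 : (n : ℝ) * (200000 * t / (1001 * (k : ℝ)))
        = 200000 * ((n : ℝ) * t) / (1001 * (k : ℝ)) := by ring
    rw [h1, le_div_iff₀ (by positivity)]
    have hklk : (0 : ℝ) ≤ (k : ℝ) * lk := by positivity
    nlinarith [hnt, ht_sq, htk', hklk]
  have hqn : q ^ n ≤ Real.exp 200 * ((k : ℝ) ^ (9990 : ℕ))⁻¹ := by
    have h1 : q ^ n ≤ Real.exp (-(200000 * t / (1001 * (k : ℝ)))) ^ n :=
      pow_le_pow_left₀ hq0 hq_exp2 n
    have h2 : Real.exp (-(200000 * t / (1001 * (k : ℝ)))) ^ n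
        = Real.exp ((n : ℝ) * (-(200000 * t / (1001 * (k : ℝ))))) := by
      rw [Real.exp_nat_mul]
    have h3 : (n : ℝ) * (-(200000 * t / (1001 * (k : ℝ)))) ≤ 200 - 9990 * lk := by
      have := key
      nlinarith [key]
    have h4 : Real.exp (200 - 9990 * lk) = Real.exp 200 * ((k : ℝ) ^ (9990 : ℕ))⁻¹ := by
      have hek : Real.exp (9990 * lk) = (k : ℝ) ^ (9990 : ℕ) := by
        rw [show (9990 : ℝ) * lk = ((9990 : ℕ) : ℝ) * lk by norm_num, Real.exp_nat_mul,
          hlk_def, Real.exp_log hkpos]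
      rw [Real.exp_sub, hek, div_eq_mul_inv]
    calc q ^ n ≤ Real.exp (-(200000 * t / (1001 * (k : ℝ)))) ^ n := h1
      _ = Real.exp ((n : ℝ) * (-(200000 * t / (1001 * (k : ℝ))))) := h2
      _ ≤ Real.exp (200 - 9990 * lk) := Real.exp_le_exp.mpr h3
      _ = Real.exp 200 * ((k : ℝ) ^ (9990 : ℕ))⁻¹ := h4
  -- assemble the main bound
  have hchoose_m0 : (0 : ℝ) ≤ (k.choose m : ℝ) := by positivity
  have hmain : L ≤ 15 * (k : ℝ) ^ (16 : ℕ) / (k : ℝ) ^ (10000 : ℕ) * S := by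
    have step1 : L ≤ ((k : ℝ) + 1) * (q ^ n * (k.choose m : ℝ)) := by
      refine hLbound.trans (mul_le_mul_of_nonneg_left ?_ (by positivity))
      calc (k.choose a : ℝ) ≤ q ^ n * (k.choose b : ℝ) := hratio
        _ ≤ q ^ n * (k.choose m : ℝ) := mul_le_mul_of_nonneg_left hbm' (by positivity)
    have step2 : ((k : ℝ) + 1) * (q ^ n * (k.choose m : ℝ))
        ≤ ((k : ℝ) + 1) * (Real.exp 200 * ((k : ℝ) ^ (9990 : ℕ))⁻¹) * (k.choose m : ℝ) := by
      have := mul_le_mul_of_nonneg_right hqn hchoose_m0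
      have h' := mul_le_mul_of_nonneg_left this (show (0 : ℝ) ≤ (k : ℝ) + 1 by linarith)
      calc ((k : ℝ) + 1) * (q ^ n * (k.choose m : ℝ))
          ≤ ((k : ℝ) + 1) * (Real.exp 200 * ((k : ℝ) ^ (9990 : ℕ))⁻¹ * (k.choose m : ℝ)) := h'
        _ = ((k : ℝ) + 1) * (Real.exp 200 * ((k : ℝ) ^ (9990 : ℕ))⁻¹) * (k.choose m : ℝ) := by
            ring
    have step3 : ((k : ℝ) + 1) * (Real.exp 200 * ((k : ℝ) ^ (9990 : ℕ))⁻¹)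
        ≤ 15 * (k : ℝ) ^ (16 : ℕ) / (k : ℝ) ^ (10000 : ℕ) := by
      have hk1 : (1 : ℝ) ≤ (k : ℝ) := by linarith
      have he : Real.exp 200 ≤ 15 * (k : ℝ) / 2 := by
        have := he200
        linarith
      rw [show ((k : ℝ) + 1) * (Real.exp 200 * ((k : ℝ) ^ (9990 : ℕ))⁻¹)
          = ((k : ℝ) + 1) * Real.exp 200 / (k : ℝ) ^ (9990 : ℕ) by ring]
      rw [div_le_div_iff₀ (by positivity) (by positivity)]
      calc ((k : ℝ) + 1) * Real.exp 200 * (k : ℝ) ^ (10000 : ℕ)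
          ≤ (2 * (k : ℝ)) * (15 * (k : ℝ) / 2) * (k : ℝ) ^ (10000 : ℕ) := by
            apply mul_le_mul_of_nonneg_right _ (by positivity)
            apply mul_le_mul (by linarith) he (Real.exp_pos _).le (by linarith)
        _ = 15 * ((k : ℝ) ^ (2 : ℕ) * (k : ℝ) ^ (10000 : ℕ)) := by ring
        _ = 15 * (k : ℝ) ^ (10002 : ℕ) := by rw [← pow_add]
        _ ≤ 15 * (k : ℝ) ^ (10006 : ℕ) := by
            have h := pow_le_pow_right₀ hk1 (show (10002 : ℕ) ≤ 10006 by norm_num)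
            linarith
        _ = 15 * (k : ℝ) ^ (16 : ℕ) * (k : ℝ) ^ (9990 : ℕ) := by
            rw [show (10006 : ℕ) = 16 + 9990 by norm_num, pow_add, ← mul_assoc]
    have hcoef0 : (0 : ℝ) ≤ 15 * (k : ℝ) ^ (16 : ℕ) / (k : ℝ) ^ (10000 : ℕ) := by positivity
    calc L ≤ ((k : ℝ) + 1) * (q ^ n * (k.choose m : ℝ)) := step1
      _ ≤ ((k : ℝ) + 1) * (Real.exp 200 * ((k : ℝ) ^ (9990 : ℕ))⁻¹) * (k.choose m : ℝ) := step2
      _ ≤ 15 * (k : ℝ) ^ (16 : ℕ) / (k : ℝ) ^ (10000 : ℕ) * (k.choose m : ℝ) :=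
          mul_le_mul_of_nonneg_right step3 hchoose_m0
      _ ≤ 15 * (k : ℝ) ^ (16 : ℕ) / (k : ℝ) ^ (10000 : ℕ) * S :=
          mul_le_mul_of_nonneg_left hSm hcoef0
  refine ⟨hmain, ?_⟩
  have hk1 : (1 : ℝ) ≤ (k : ℝ) := by linarith
  have h15 : (15 : ℝ) ≤ c₁ * (k : ℝ) := by
    rw [div_le_iff₀ hc₁] at hc1k
    linarith [hc1k]
  have h2 : (k : ℝ) ≤ (k : ℝ) ^ (9984 : ℕ) := le_self_pow₀ hk1 (by norm_num)
  have hcoef : 15 * (k : ℝ) ^ (16 : ℕ) / (k : ℝ) ^ (10000 : ℕ) ≤ c₁ := by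
    rw [div_le_iff₀ (by positivity)]
    calc 15 * (k : ℝ) ^ (16 : ℕ) ≤ (c₁ * (k : ℝ)) * (k : ℝ) ^ (16 : ℕ) :=
          mul_le_mul_of_nonneg_right h15 (by positivity)
      _ ≤ (c₁ * (k : ℝ) ^ (9984 : ℕ)) * (k : ℝ) ^ (16 : ℕ) :=
          mul_le_mul_of_nonneg_right (mul_le_mul_of_nonneg_left h2 hc₁.le) (by positivity)
      _ = c₁ * (k : ℝ) ^ (10000 : ℕ) := by
          rw [mul_assoc, ← pow_add]
  calc L ≤ 15 * (k : ℝ) ^ (16 : ℕ) / (k : ℝ) ^ (10000 : ℕ) * S := hmain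
    _ ≤ c₁ * S := mul_le_mul_of_nonneg_right hcoef hS0
end

section
/- Hashing lemma for certificate games: let f be a (possibly partial) Boolean function, L ∈ ℕ, and t with 20 ≤ t ≤ 0.1L. Suppose for every x ∈ f⁻¹(0) and y ∈ f⁻¹(1) there are sets A_x, B_y ⊆ [n] with |A_x| = |B_y| = L such that every i ∈ A_x ∩ B_y satisfies x_i ≠ y_i, and L ≤ t·|A_x ∩ B_y|. Then there is a public coin strategy winning the certificate game with probability at least 1/(18t²) on every input pair; hence CG^pub(f) ≤ 18t². -/
/-!
Instead of hashing, both players use min-wise sampling: under a uniformly random ranking `π` of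
the coordinates, the first element of `A x ∪ B y` is uniform on that union, and whenever it lies
in `A x ∩ B y` it is simultaneously the first element of `A x` and of `B y`. Both players then
output the same certifying index, which happens with probability
`|A x ∩ B y| / |A x ∪ B y| ≥ |A x ∩ B y| / (2L) ≥ 1 / (2t) ≥ 1 / (18t²)`.
-/

open Finset

namespace Equiv.Perm

variable {α : Type*} [LinearOrder α] [Fintype α] [Inhabited α]

/-- The element of `s` ranked first by `π` (`default` if `s` is empty). -/
noncomputable def argmin (π : Perm α) (s : Finset α) : α :=
  if hs : s.Nonempty then Function.argminOn π (s : Set α) hs else default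

variable (π : Perm α) {s t : Finset α}

theorem argmin_mem (hs : s.Nonempty) : π.argmin s ∈ s := by
  rw [argmin, dif_pos hs]
  exact Function.argminOn_mem _ _ _

theorem apply_argmin_le {j : α} (hj : j ∈ s) : π (π.argmin s) ≤ π j := by
  rw [argmin, dif_pos ⟨j, hj⟩]
  exact Function.argminOn_le _ (s : Set α) hj

theorem argmin_eq_of_forall_le {i : α} (hi : i ∈ s) (h : ∀ j ∈ s, π i ≤ π j) :
    π.argmin s = i :=
  π.injective <| le_antisymm (π.apply_argmin_le hi) (h _ (π.argmin_mem ⟨i, hi⟩))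

theorem argmin_eq_of_subset (hts : t ⊆ s) (h : π.argmin s ∈ t) : π.argmin t = π.argmin s :=
  π.argmin_eq_of_forall_le h fun _ hj ↦ π.apply_argmin_le (hts hj)

theorem argmin_mul_swap [DecidableEq α] {i j : α} (hi : i ∈ s) (hj : j ∈ s) :
    (π * swap i j).argmin s = swap i j (π.argmin s) := by
  have hmem : ∀ {a}, a ∈ s → swap i j a ∈ s := fun ha ↦ by
    rw [swap_apply_def]; split_ifs <;> assumption
  refine argmin_eq_of_forall_le _ (hmem (π.argmin_mem ⟨i, hi⟩)) fun k hk ↦ ?_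
  simpa only [mul_apply, swap_apply_self] using π.apply_argmin_le (hmem hk)

variable [DecidableEq α]

theorem card_argmin_eq_eq {i j : α} (hi : i ∈ s) (hj : j ∈ s) :
    #{π : Perm α | π.argmin s = i} = #{π : Perm α | π.argmin s = j} := by
  refine card_bij' (fun π _ ↦ π * swap i j) (fun π _ ↦ π * swap i j) ?_ ?_ ?_ ?_ <;>
    simp_all [argmin_mul_swap, mul_assoc]

/-- The first element of `s` under a uniformly random ranking is uniformly distributed on `s`. -/
theorem card_argmin_eq_mul_card {i : α} (hi : i ∈ s) :
    #{π : Perm α | π.argmin s = i} * #s = Fintype.card (Perm α) := by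
  rw [← card_univ, card_eq_sum_card_fiberwise (s := univ) fun π _ ↦ π.argmin_mem ⟨i, hi⟩,
    sum_const_nat fun j hj ↦ card_argmin_eq_eq hj hi, mul_comm]

theorem card_argmin_mem_mul_card (hts : t ⊆ s) :
    #{π : Perm α | π.argmin s ∈ t} * #s = #t * Fintype.card (Perm α) := by
  rw [← sum_card_fiberwise_eq_card_filter, sum_mul,
    sum_congr rfl fun j hj ↦ card_argmin_eq_mul_card (hts hj), sum_const, smul_eq_mul]

theorem card_argmin_mem_div_card (hts : t ⊆ s) (hs : s.Nonempty) :
    (#{π : Perm α | π.argmin s ∈ t} : ℝ) / Fintype.card (Perm α) = #t / #s := by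
  rw [div_eq_div_iff (by positivity) (by exact_mod_cast hs.card_pos.ne')]
  exact_mod_cast card_argmin_mem_mul_card hts

end Equiv.Perm

section UniformLaw

variable {Ω β : Type*} [Fintype Ω] [DecidableEq β]

/-- The law of `g` under the uniform distribution on `Ω`, as a weight function on `β`. -/
noncomputable def uniformLaw (g : Ω → β) (b : β) : ℝ :=
  #{ω | g ω = b} / Fintype.card Ω

theorem uniformLaw_nonneg (g : Ω → β) (b : β) : 0 ≤ uniformLaw g b := by
  unfold uniformLaw
  positivity

theorem sum_filter_uniformLaw [Fintype β] (g : Ω → β) (P : β → Prop) [DecidablePred P] :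
    ∑ b ∈ univ.filter P, uniformLaw g b = #{ω | P (g ω)} / Fintype.card Ω := by
  simp only [uniformLaw, ← sum_div, ← Nat.cast_sum, sum_card_fiberwise_eq_card_filter, mem_filter,
    mem_univ, true_and]

theorem sum_uniformLaw [Fintype β] [Nonempty Ω] (g : Ω → β) : ∑ b, uniformLaw g b = 1 := by
  simpa using sum_filter_uniformLaw g fun _ ↦ True

end UniformLaw

/-- Hashing lemma for certificate games: let `f` be a (possibly partial) Boolean function,
`L ∈ ℕ` and `20 ≤ t ≤ 0.1·L`. If every `x ∈ f⁻¹(0)` and `y ∈ f⁻¹(1)` have sets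
`A x, B y ⊆ [n]` of size exactly `L` such that every `i ∈ A x ∩ B y` satisfies `x i ≠ y i`,
and `L ≤ t·|A x ∩ B y|`, then there is a public coin strategy (a distribution over pairs of
deterministic strategies) winning the certificate game with probability at least
`1/(18t²)` on every input pair; hence `CG^pub(f) ≤ 18t²`. -/
theorem stmt_16 {n : ℕ} (hn : 0 < n) (f : (Fin n → Bool) → Option Bool)
    (L : ℕ) (t : ℝ) (ht1 : 20 ≤ t) (ht2 : t ≤ 0.1 * L)
    (A B : (Fin n → Bool) → Finset (Fin n))
    (hcardA : ∀ x, f x = some false → (A x).card = L)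
    (hcardB : ∀ y, f y = some true → (B y).card = L)
    (hcorrect : ∀ x y, f x = some false → f y = some true →
      ∀ i ∈ A x ∩ B y, x i ≠ y i)
    (hint : ∀ x y, f x = some false → f y = some true →
      (L : ℝ) ≤ t * ((A x ∩ B y).card : ℝ)) :
    ∃ p : (((Fin n → Bool) → Fin n) × ((Fin n → Bool) → Fin n)) → ℝ,
      (∀ AB, 0 ≤ p AB) ∧ (∑ AB, p AB = 1) ∧
      ∀ x y, f x = some false → f y = some true →
        1 / (18 * t ^ 2) ≤
          ∑ AB ∈ univ.filter
            (fun AB : ((Fin n → Bool) → Fin n) × ((Fin n → Bool) → Fin n) =>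
              AB.1 x = AB.2 y ∧ x (AB.1 x) ≠ y (AB.1 x)), p AB := by
  classical
  have : NeZero n := ⟨hn.ne'⟩
  let play (π : Equiv.Perm (Fin n)) : ((Fin n → Bool) → Fin n) × ((Fin n → Bool) → Fin n) :=
    (fun x ↦ π.argmin (A x), fun y ↦ π.argmin (B y))
  refine ⟨uniformLaw play, uniformLaw_nonneg play, sum_uniformLaw play, fun x y hx hy ↦ ?_⟩
  rw [sum_filter_uniformLaw]
  have hwin (π : Equiv.Perm (Fin n)) (h : π.argmin (A x ∪ B y) ∈ A x ∩ B y) :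
      (play π).1 x = (play π).2 y ∧ x ((play π).1 x) ≠ y ((play π).1 x) := by
    have hA := π.argmin_eq_of_subset subset_union_left (mem_of_mem_inter_left h)
    have hB := π.argmin_eq_of_subset subset_union_right (mem_of_mem_inter_right h)
    simpa only [play, hA, hB, true_and] using hcorrect x y hx hy _ h
  have hL : (200 : ℝ) ≤ L := by linarith
  have hcap : (0 : ℝ) < #(A x ∩ B y) := by nlinarith [hint x y hx hy]
  have hcup : (#(A x ∪ B y) : ℝ) ≤ 2 * L := by
    exact_mod_cast (card_union_le _ _).trans_eq (by rw [hcardA x hx, hcardB y hy, two_mul])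
  have hcapcup : (#(A x ∩ B y) : ℝ) ≤ #(A x ∪ B y) := by
    exact_mod_cast card_le_card inter_subset_union
  calc 1 / (18 * t ^ 2) ≤ #(A x ∩ B y) / #(A x ∪ B y) := by
        rw [div_le_div_iff₀ (by positivity) (by linarith)]
        nlinarith [hint x y hx hy]
    _ = #{π : Equiv.Perm (Fin n) | π.argmin (A x ∪ B y) ∈ A x ∩ B y} /
          Fintype.card (Equiv.Perm (Fin n)) :=
        (Equiv.Perm.card_argmin_mem_div_card inter_subset_union
          ((card_pos.mp (by exact_mod_cast hcap)).mono inter_subset_union)).symm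
    _ ≤ _ := by
        gcongr
        exact hwin _
end

section
/- For any total Boolean function f on n bits, CG^pub(f) ≤ e²·C(f): there is a shared-randomness strategy for the certificate game winning with probability at least 1/(e²·C(f)) on every pair x ∈ f⁻¹(0), y ∈ f⁻¹(1). -/
open Finset

noncomputable def certStrat {n C : ℕ} (S : (Fin n → Bool) → Finset (Fin n)) (i0 : Fin n)
    (r : (Fin n → Fin C) × Fin C) (x : Fin n → Bool) : Fin n :=
  if hne : ((S x).filter (fun i => r.1 i = r.2)).Nonempty
  then ((S x).filter (fun i => r.1 i = r.2)).min' hne else i0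

lemma certStrat_eq {n C : ℕ} (S : (Fin n → Bool) → Finset (Fin n)) (i0 : Fin n)
    (r : (Fin n → Fin C) × Fin C) (x : Fin n → Bool) (istar : Fin n)
    (h1 : istar ∈ S x) (h2 : r.1 istar = r.2)
    (h3 : ∀ j ∈ S x, j ≠ istar → r.1 j ≠ r.2) :
    certStrat S i0 r x = istar := by
  have hfil : (S x).filter (fun i => r.1 i = r.2) = {istar} := by
    ext j
    simp only [Finset.mem_filter, Finset.mem_singleton]
    constructor
    · rintro ⟨hj, hj2⟩
      by_contra hne
      exact h3 j hj hne hj2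
    · rintro rfl; exact ⟨h1, h2⟩
  simp [certStrat, hfil]

lemma anl (C k : ℕ) (hC : 1 ≤ C) (hk : k ≤ 2 * (C - 1)) :
    1 / (Real.exp 1 ^ 2 * (C : ℝ)) ≤ ((C - 1 : ℕ) : ℝ) ^ k / (C : ℝ) ^ (k + 1) := by
  have hc : (1:ℝ) ≤ (C:ℝ) := by exact_mod_cast hC
  have hc0 : (0:ℝ) < C := by linarith
  have hbase : (0:ℝ) ≤ ((C-1:ℕ):ℝ) / C := by positivity
  have hbase1 : ((C-1:ℕ):ℝ) / C ≤ 1 := by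
    rw [div_le_one hc0]
    have : ((C-1:ℕ):ℝ) ≤ (C:ℝ) := by exact_mod_cast Nat.sub_le C 1
    linarith
  have key : Real.exp (-1) ≤ (((C-1:ℕ):ℝ) / C) ^ (C - 1) := by
    rcases Nat.eq_or_lt_of_le hC with h1 | h2
    · have h0 : C - 1 = 0 := by omega
      rw [h0, pow_zero]
      exact Real.exp_le_one_iff.2 (by norm_num)
    · have hcm1 : (0:ℝ) < ((C-1:ℕ):ℝ) := by
        have : 1 ≤ C - 1 := by omega
        exact_mod_cast Nat.lt_of_lt_of_le Nat.zero_lt_one this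
      have hcast : ((C-1:ℕ):ℝ) = (C:ℝ) - 1 := by
        push_cast [Nat.cast_sub hC]; ring
      have hstep : (C:ℝ) / ((C-1:ℕ):ℝ) ≤ Real.exp (1 / ((C-1:ℕ):ℝ)) := by
        have h := Real.add_one_le_exp (1 / ((C-1:ℕ):ℝ))
        rw [div_le_iff₀ hcm1]
        have hne : ((C-1:ℕ):ℝ) ≠ 0 := ne_of_gt hcm1
        have heq : (C:ℝ) = (1 / ((C-1:ℕ):ℝ) + 1) * ((C-1:ℕ):ℝ) := by
          rw [add_mul, one_mul, div_mul_cancel₀ _ hne, hcast]; ring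
        rw [heq]
        exact mul_le_mul_of_nonneg_right h (le_of_lt hcm1)
      have hup : ((C:ℝ) / ((C-1:ℕ):ℝ)) ^ (C-1) ≤ Real.exp 1 := by
        have h1 : ((C:ℝ) / ((C-1:ℕ):ℝ)) ^ (C-1) ≤ Real.exp (1 / ((C-1:ℕ):ℝ)) ^ (C-1) :=
          pow_le_pow_left₀ (by positivity) hstep _
        have h2' : Real.exp (1 / ((C-1:ℕ):ℝ)) ^ (C-1) = Real.exp 1 := by
          rw [← Real.exp_nat_mul]
          congr 1
          rw [mul_one_div, div_self (ne_of_gt hcm1)]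
        rw [h2'] at h1
        exact h1
      have hinv : (((C-1:ℕ):ℝ) / C) ^ (C-1) = (((C:ℝ) / ((C-1:ℕ):ℝ)) ^ (C-1))⁻¹ := by
        rw [← inv_pow, inv_div]
      rw [hinv, Real.exp_neg]
      exact inv_anti₀ (by positivity) hup
  have key2 : Real.exp (-1) ^ 2 ≤ (((C-1:ℕ):ℝ) / C) ^ (2 * (C-1)) := by
    rw [mul_comm, pow_mul]
    exact pow_le_pow_left₀ (Real.exp_pos _).le key 2
  have key3 : (((C-1:ℕ):ℝ) / C) ^ (2*(C-1)) ≤ (((C-1:ℕ):ℝ) / C) ^ k :=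
    pow_le_pow_of_le_one hbase hbase1 hk
  have hkey : Real.exp (-1) ^ 2 ≤ (((C-1:ℕ):ℝ)/C) ^ k := le_trans key2 key3
  have hrw : ((C - 1 : ℕ) : ℝ) ^ k / (C : ℝ) ^ (k + 1) = (((C-1:ℕ):ℝ)/C)^k * (1/C) := by
    rw [div_pow, pow_succ]
    field_simp
  rw [hrw]
  have hexp : Real.exp (-1) ^ 2 = 1 / Real.exp 1 ^ 2 := by
    rw [Real.exp_neg]; field_simp
  rw [hexp] at hkey
  calc 1 / (Real.exp 1 ^ 2 * (C:ℝ)) = (1 / Real.exp 1 ^ 2) * (1/C) := by ring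
    _ ≤ (((C-1:ℕ):ℝ)/C)^k * (1/C) := mul_le_mul_of_nonneg_right hkey (by positivity)

set_option maxHeartbeats 2000000 in
/-- `CG^pub(f) ≤ e²·C(f)` for total Boolean functions: if every input `x` has a certificate
of size at most `C` (a set of indices fixing the value of `f`), then there is a
shared-randomness strategy (a distribution over pairs of deterministic strategies) for the
certificate game winning with probability at least `1/(e²·C)` on every pair
`x ∈ f⁻¹(0)`, `y ∈ f⁻¹(1)`. -/
theorem stmt_18 {n : ℕ} (hn : 0 < n) (f : (Fin n → Bool) → Bool) (C : ℕ)
    (hC : ∀ x, ∃ S : Finset (Fin n), S.card ≤ C ∧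
      ∀ x' : Fin n → Bool, (∀ i ∈ S, x' i = x i) → f x' = f x) :
    ∃ p : (((Fin n → Bool) → Fin n) × ((Fin n → Bool) → Fin n)) → ℝ,
      (∀ AB, 0 ≤ p AB) ∧ (∑ AB, p AB = 1) ∧
      ∀ x y, f x = false → f y = true →
        1 / (Real.exp 1 ^ 2 * (C : ℝ)) ≤
          ∑ AB ∈ univ.filter
            (fun AB : ((Fin n → Bool) → Fin n) × ((Fin n → Bool) → Fin n) =>
              AB.1 x = AB.2 y ∧ x (AB.1 x) ≠ y (AB.1 x)), p AB := by
  classical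
  have i0 : Fin n := ⟨0, hn⟩
  rcases Nat.eq_zero_or_pos C with hC0 | hC1
  · subst hC0
    refine ⟨fun AB => if AB = ((fun _ => i0), (fun _ => i0)) then 1 else 0, ?_, ?_, ?_⟩
    · intro AB; dsimp only; split <;> norm_num
    · simp
    · intro x y hx hy
      have h0 : (1:ℝ) / (Real.exp 1 ^ 2 * ((0:ℕ) : ℝ)) = 0 := by norm_num
      rw [h0]
      apply Finset.sum_nonneg
      intro AB _
      split <;> norm_num
  · haveI : NeZero C := ⟨by omega⟩
    choose S hScard hScert using hC
    set g : ((Fin n → Fin C) × Fin C) → (((Fin n → Bool) → Fin n) × ((Fin n → Bool) → Fin n)) :=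
      fun r => (certStrat S i0 r, certStrat S i0 r) with hg
    set N : ℝ := (Fintype.card ((Fin n → Fin C) × Fin C) : ℝ) with hNdef
    have hN : 0 < N := by
      rw [hNdef]
      exact_mod_cast Fintype.card_pos
    refine ⟨fun AB => (∑ r, if g r = AB then (1:ℝ) else 0) / N, ?_, ?_, ?_⟩
    · intro AB
      apply div_nonneg _ hN.le
      apply Finset.sum_nonneg
      intro r _
      split <;> norm_num
    · rw [← Finset.sum_div, Finset.sum_comm]
      have h1 : ∀ r : (Fin n → Fin C) × Fin C,
          (∑ AB : ((Fin n → Bool) → Fin n) × ((Fin n → Bool) → Fin n),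
            if g r = AB then (1:ℝ) else 0) = 1 := by
        intro r
        rw [Finset.sum_ite_eq]
        simp
      simp only [h1]
      rw [Finset.sum_const, nsmul_eq_mul, mul_one, Finset.card_univ, div_self (ne_of_gt hN)]
    · intro x y hx hy
      -- conflict index
      have hconf : ∃ i, i ∈ S x ∧ i ∈ S y ∧ x i ≠ y i := by
        by_contra hcon
        push_neg at hcon
        have h1 : f (fun i => if i ∈ S x then x i else y i) = f x := by
          apply hScert
          intro i hi
          simp [hi]
        have h2 : f (fun i => if i ∈ S x then x i else y i) = f y := by
          apply hScert
          intro i hi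
          by_cases hix : i ∈ S x
          · simp [hix, hcon i hix hi]
          · simp [hix]
        rw [hx] at h1
        rw [hy] at h2
        rw [h1] at h2
        exact Bool.noConfusion h2
      obtain ⟨istar, hix, hiy, hxy⟩ := hconf
      set U : Finset (Fin n) := S x ∪ S y with hU
      have hiU : istar ∈ U := Finset.mem_union_left _ hix
      have hm1 : 1 ≤ U.card := Finset.card_pos.mpr ⟨istar, hiU⟩
      have hm2 : U.card ≤ 2 * C - 1 := by
        have hinter : 1 ≤ (S x ∩ S y).card :=
          Finset.card_pos.mpr ⟨istar, Finset.mem_inter.mpr ⟨hix, hiy⟩⟩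
        have hcu := Finset.card_union_add_card_inter (S x) (S y)
        rw [← hU] at hcu
        have hx' := hScard x
        have hy' := hScard y
        omega
      have hk2 : U.card - 1 ≤ 2 * (C - 1) := by omega
      have hnm : U.card ≤ n := by
        have := Finset.card_le_univ U
        simpa using this
      set Good : Finset ((Fin n → Fin C) × Fin C) :=
        univ.filter (fun r => r.1 istar = r.2 ∧ ∀ j ∈ U, j ≠ istar → r.1 j ≠ r.2) with hGoodDef
      -- each good r wins
      have hwin : ∀ r ∈ Good, g r ∈ univ.filter
          (fun AB : ((Fin n → Bool) → Fin n) × ((Fin n → Bool) → Fin n) =>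
            AB.1 x = AB.2 y ∧ x (AB.1 x) ≠ y (AB.1 x)) := by
        intro r hr
        rw [hGoodDef, Finset.mem_filter] at hr
        obtain ⟨-, hr1, hr2⟩ := hr
        have hax : certStrat S i0 r x = istar :=
          certStrat_eq S i0 r x istar hix hr1
            (fun j hj => hr2 j (Finset.mem_union_left _ hj))
        have hay : certStrat S i0 r y = istar :=
          certStrat_eq S i0 r y istar hiy hr1
            (fun j hj => hr2 j (Finset.mem_union_right _ hj))
        rw [Finset.mem_filter]
        refine ⟨Finset.mem_univ _, ?_, ?_⟩
        · show certStrat S i0 r x = certStrat S i0 r y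
          rw [hax, hay]
        · show x (certStrat S i0 r x) ≠ y (certStrat S i0 r x)
          rw [hax]
          exact hxy
      -- counting Good
      have hGoodCard : Good.card = C * ((C - 1) ^ (U.card - 1) * C ^ (n - U.card)) := by
        have hfib : Good.card = ∑ z : Fin C, (Good.filter (fun r => r.2 = z)).card :=
          Finset.card_eq_sum_card_fiberwise (fun r _ => Finset.mem_univ r.2)
        have hzcard : ∀ z : Fin C, (Good.filter (fun r => r.2 = z)).card
            = (C - 1) ^ (U.card - 1) * C ^ (n - U.card) := by
          intro z
          set t : Fin n → Finset (Fin C) := fun i =>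
            if i = istar then ({z} : Finset (Fin C))
            else if i ∈ U then ({z} : Finset (Fin C))ᶜ else univ with ht
          have himg : Good.filter (fun r => r.2 = z)
              = (Fintype.piFinset t).image (fun h => (h, z)) := by
            ext r
            simp only [Finset.mem_filter, Finset.mem_image, Fintype.mem_piFinset, hGoodDef,
              Finset.mem_univ, true_and, ht]
            constructor
            · rintro ⟨⟨h1, h2⟩, hz⟩
              refine ⟨r.1, fun i => ?_, ?_⟩
              · by_cases hii : i = istar
                · subst hii
                  simp [h1, hz]
                · by_cases hiu : i ∈ U
                  · simp only [if_neg hii, if_pos hiu, Finset.mem_compl,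
                      Finset.mem_singleton]
                    rw [← hz]
                    exact h2 i hiu hii
                  · simp [hii, hiu]
              · rw [← hz]
            · rintro ⟨h, hh, rfl⟩
              have h1 := hh istar
              rw [if_pos rfl] at h1
              rw [Finset.mem_singleton] at h1
              refine ⟨⟨h1, fun j hj hjne => ?_⟩, rfl⟩
              have h2 := hh j
              rw [if_neg hjne, if_pos hj, Finset.mem_compl, Finset.mem_singleton] at h2
              exact h2
          rw [himg, Finset.card_image_of_injective _ (fun a b hab => congrArg Prod.fst hab),
            Fintype.card_piFinset, ← Finset.prod_mul_prod_compl U]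
          have hA : ∏ i ∈ U, (t i).card = (C - 1) ^ (U.card - 1) := by
            rw [← Finset.mul_prod_erase U _ hiU]
            have h1 : (t istar).card = 1 := by simp [ht]
            have h2 : ∀ i ∈ U.erase istar, (t i).card = C - 1 := by
              intro i hi
              have hne := Finset.ne_of_mem_erase hi
              have hmem := Finset.mem_of_mem_erase hi
              simp [ht, hne, hmem, Finset.card_compl]
            rw [h1, one_mul, Finset.prod_congr rfl h2, Finset.prod_const,
              Finset.card_erase_of_mem hiU]
          have hB : ∏ i ∈ Uᶜ, (t i).card = C ^ (n - U.card) := by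
            have h3 : ∀ i ∈ Uᶜ, (t i).card = C := by
              intro i hi
              rw [Finset.mem_compl] at hi
              have hne : i ≠ istar := fun h => hi (h ▸ hiU)
              simp [ht, hne, hi]
            rw [Finset.prod_congr rfl h3, Finset.prod_const, Finset.card_compl,
              Fintype.card_fin]
          rw [hA, hB]
        rw [hfib]
        simp only [hzcard]
        rw [Finset.sum_const, Finset.card_univ, Fintype.card_fin, smul_eq_mul]
      -- sum lower bound by Good.card / N
      have hsum : (Good.card : ℝ) / N ≤ ∑ AB ∈ univ.filter
            (fun AB : ((Fin n → Bool) → Fin n) × ((Fin n → Bool) → Fin n) =>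
              AB.1 x = AB.2 y ∧ x (AB.1 x) ≠ y (AB.1 x)),
            (∑ r, if g r = AB then (1:ℝ) else 0) / N := by
        rw [← Finset.sum_div]
        rw [div_le_div_iff_of_pos_right hN]
        have hswap : (∑ AB ∈ univ.filter
            (fun AB : ((Fin n → Bool) → Fin n) × ((Fin n → Bool) → Fin n) =>
              AB.1 x = AB.2 y ∧ x (AB.1 x) ≠ y (AB.1 x)),
            ∑ r, if g r = AB then (1:ℝ) else 0)
            = ∑ r : (Fin n → Fin C) × Fin C,
              if g r ∈ univ.filter
                (fun AB : ((Fin n → Bool) → Fin n) × ((Fin n → Bool) → Fin n) =>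
                  AB.1 x = AB.2 y ∧ x (AB.1 x) ≠ y (AB.1 x)) then (1:ℝ) else 0 := by
          rw [Finset.sum_comm]
          exact Finset.sum_congr rfl (fun r _ => Finset.sum_ite_eq _ (g r) (fun _ => 1))
        rw [hswap]
        calc (Good.card : ℝ) = ∑ r ∈ Good, (1:ℝ) := by simp
          _ ≤ ∑ r ∈ Good, (if g r ∈ univ.filter
                (fun AB : ((Fin n → Bool) → Fin n) × ((Fin n → Bool) → Fin n) =>
                  AB.1 x = AB.2 y ∧ x (AB.1 x) ≠ y (AB.1 x)) then (1:ℝ) else 0) := by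
              apply Finset.sum_le_sum
              intro r hr
              rw [if_pos (hwin r hr)]
          _ ≤ _ :=
              Finset.sum_le_sum_of_subset_of_nonneg (Finset.subset_univ Good)
                (fun r _ _ => by positivity)
      -- final numeric bound
      have hc0 : (0:ℝ) < (C:ℝ) := by exact_mod_cast hC1
      have hNval : N = (C:ℝ) ^ n * (C:ℝ) := by
        rw [hNdef]
        rw [Fintype.card_prod, Fintype.card_fun, Fintype.card_fin, Fintype.card_fin]
        push_cast
        ring
      have heq : ((C - 1 : ℕ) : ℝ) ^ (U.card - 1) / (C:ℝ) ^ ((U.card - 1) + 1)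
          = (Good.card : ℝ) / N := by
        rw [hGoodCard, hNval]
        push_cast
        rw [div_eq_div_iff (by positivity) (by positivity)]
        rw [show (C:ℝ) ^ n = (C:ℝ) ^ (n - U.card) * (C:ℝ) ^ U.card from by
          rw [← pow_add]; congr 1; omega]
        rw [show (U.card - 1) + 1 = U.card from by omega]
        ring
      have hanl := anl C (U.card - 1) hC1 hk2
      rw [heq] at hanl
      exact le_trans hanl hsum
end

section
/- For the parity function ⊕_n on n bits, the private coin certificate game complexity satisfies CG(⊕_n) ≥ n²: for any family of probability distributions {p_x} on [n], there exist x, y with ⊕(x) ≠ ⊕(y) differing in exactly one bit i such that p_{x,i}·p_{y,i} ≤ 1/n². -/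
open Finset

/-- The parity of a Boolean string. -/
def parityFun {n : ℕ} (x : Fin n → Bool) : Bool :=
  decide (Odd (univ.filter (fun i => x i = true)).card)

lemma flip_parity {n : ℕ} (x : Fin n → Bool) (i : Fin n) :
    parityFun x ≠ parityFun (Function.update x i (!x i)) := by
  unfold parityFun
  have key : ∀ (f : Fin n → Bool), (univ.filter (fun j => f j = true)).card =
      ((univ.erase i).filter (fun j => f j = true)).card + (if f i = true then 1 else 0) := by
    intro f
    rw [← Finset.insert_erase (Finset.mem_univ i), Finset.filter_insert]
    split
    · rw [Finset.card_insert_of_notMem (by simp)]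
      simp
    · simp
  have heq : (univ.erase i).filter (fun j => Function.update x i (!x i) j = true) =
      (univ.erase i).filter (fun j => x j = true) := by
    apply Finset.filter_congr
    intro j hj
    rw [Function.update_of_ne (Finset.ne_of_mem_erase hj)]
  rw [key x, key (Function.update x i (!x i)), heq, Function.update_self]
  set c := ((univ.erase i).filter (fun j => x j = true)).card
  cases hxi : x i <;> simp [Nat.odd_iff] <;> omega

/-- `CG(⊕_n) ≥ n²`: for any family of probability distributions `{p_x}` on `[n]`, there is
an input pair `(x, x^(i))` of opposite parities differing in exactly one bit `i` such that
`p_{x,i}·p_{x^(i),i} ≤ 1/n²`. -/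
theorem stmt_19 {n : ℕ} (hn : 0 < n)
    (p : (Fin n → Bool) → Fin n → ℝ)
    (hnn : ∀ x i, 0 ≤ p x i) (hsum : ∀ x, ∑ i, p x i = 1) :
    ∃ x i, parityFun x ≠ parityFun (Function.update x i (!x i)) ∧
      p x i * p (Function.update x i (!x i)) i ≤ 1 / (n : ℝ) ^ 2 := by
  haveI : Nonempty (Fin n) := ⟨⟨0, hn⟩⟩
  by_contra h
  push_neg at h
  have hbig : ∀ x i, 1 / (n : ℝ) ^ 2 < p x i * p (Function.update x i (!x i)) i := by
    intro x i
    exact h x i (flip_parity x i)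
  -- For each x, ∑ i, p (x^i) i > 1 by Cauchy-Schwarz
  have claim2 : ∀ x : Fin n → Bool, 1 < ∑ i, p (Function.update x i (!x i)) i := by
    intro x
    set b : Fin n → ℝ := fun i => p (Function.update x i (!x i)) i with hb
    have hbnn : ∀ i, 0 ≤ b i := fun i => hnn _ _
    have hcs : (∑ i, Real.sqrt (p x i) * Real.sqrt (b i)) ^ 2 ≤
        (∑ i, Real.sqrt (p x i) ^ 2) * (∑ i, Real.sqrt (b i) ^ 2) :=
      Finset.sum_mul_sq_le_sq_mul_sq univ _ _
    have hA : (∑ i, Real.sqrt (p x i) ^ 2) = 1 := by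
      rw [← hsum x]; exact Finset.sum_congr rfl fun i _ => Real.sq_sqrt (hnn x i)
    have hB : (∑ i, Real.sqrt (b i) ^ 2) = ∑ i, b i :=
      Finset.sum_congr rfl fun i _ => Real.sq_sqrt (hbnn i)
    rw [hA, hB, one_mul] at hcs
    have hlow : 1 < ∑ i, Real.sqrt (p x i) * Real.sqrt (b i) := by
      have : ∀ i ∈ univ, (1 / (n : ℝ)) < Real.sqrt (p x i) * Real.sqrt (b i) := by
        intro i _
        rw [← Real.sqrt_mul (hnn x i)]
        have h1 : Real.sqrt (1 / (n : ℝ) ^ 2) < Real.sqrt (p x i * b i) :=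
          Real.sqrt_lt_sqrt (by positivity) (hbig x i)
        have h2 : Real.sqrt (1 / (n : ℝ) ^ 2) = 1 / (n : ℝ) := by
          rw [one_div, Real.sqrt_inv, Real.sqrt_sq (Nat.cast_nonneg n), one_div]
        linarith
      have hsum' : ∑ i : Fin n, (1 / (n : ℝ)) < ∑ i, Real.sqrt (p x i) * Real.sqrt (b i) :=
        Finset.sum_lt_sum_of_nonempty (Finset.univ_nonempty) this
      have : ∑ i : Fin n, (1 / (n : ℝ)) = 1 := by
        rw [Finset.sum_const, Finset.card_univ, Fintype.card_fin, nsmul_eq_mul]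
        field_simp
      linarith
    nlinarith [Finset.sum_nonneg (fun i (_ : i ∈ univ) => hbnn i)]
  -- Total sum equals 2^n
  have htot : ∑ x : Fin n → Bool, ∑ i, p (Function.update x i (!x i)) i
      = (2 : ℝ) ^ n := by
    rw [Finset.sum_comm]
    have : ∀ i : Fin n, ∑ x : Fin n → Bool, p (Function.update x i (!x i)) i
        = ∑ x : Fin n → Bool, p x i := by
      intro i
      apply Finset.sum_nbij' (fun x => Function.update x i (!x i))
        (fun x => Function.update x i (!x i))
      · intros; exact Finset.mem_univ _
      · intros; exact Finset.mem_univ _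
      · intro x _
        simp [Function.update_idem, Function.update_self, Function.update_eq_self]
      · intro x _
        simp [Function.update_idem, Function.update_self, Function.update_eq_self]
      · intros; rfl
    rw [Finset.sum_congr rfl fun i _ => this i, Finset.sum_comm]
    simp [hsum, Finset.card_univ]
  have hlt : (2 : ℝ) ^ n < ∑ x : Fin n → Bool, ∑ i, p (Function.update x i (!x i)) i := by
    calc (2:ℝ)^n = ∑ _x : Fin n → Bool, (1:ℝ) := by simp [Finset.card_univ]
    _ < _ := Finset.sum_lt_sum_of_nonempty Finset.univ_nonempty (fun x _ => claim2 x)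
  linarith [htot ▸ hlt]
end
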